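/- arXiv:1407.0525 — 12 statements merged into one kernel-verified Lean document; each statement's English description precedes it below -/
import Mathlib

section
/- If T is a power bounded operator on a Hilbert space H and L is a Banach limit, then there exists a unique positive operator A_{T,L} ∈ B(H) such that ⟨A_{T,L} x, y⟩ = L-lim_n ⟨T*^n T^n x, y⟩ for all x, y ∈ H. -/
open ContinuousLinearMap Filter Topology BoundedContinuousFunction

/-- The shift `n ↦ n + 1` as a continuous map on `ℕ`. -/
def natShift : C(ℕ, ℕ) := ⟨fun n => n + 1, continuous_of_discreteTopology⟩

/-- A Banach limit: a norm-one positive shift-invariant continuous linear functional on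
the space of bounded (complex) sequences which extends the ordinary limit functional. -/
structure IsBanachLimit (L : (ℕ →ᵇ ℂ) →L[ℂ] ℂ) : Prop where
  norm_one : ‖L‖ = 1
  lim_eq : ∀ (f : ℕ →ᵇ ℂ) (c : ℂ), Tendsto f atTop (𝓝 c) → L f = c
  pos : ∀ f : ℕ →ᵇ ℂ, (∀ n, 0 ≤ (f n).re ∧ (f n).im = 0) → 0 ≤ (L f).re ∧ (L f).im = 0
  shift_inv : ∀ f : ℕ →ᵇ ℂ, L (f.compContinuous natShift) = L f

/-- `A` is the `L`-asymptotic limit of `T`: a positive operator whose sesquilinear form is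
the `L`-limit of the forms of the self-adjoint iterates `T*^n T^n`. -/
def IsLAsymptoticLimit {H : Type*} [NormedAddCommGroup H] [InnerProductSpace ℂ H]
    [CompleteSpace H] (L : (ℕ →ᵇ ℂ) →L[ℂ] ℂ) (T A : H →L[ℂ] H) : Prop :=
  A.IsPositive ∧ ∀ (x y : H) (f : ℕ →ᵇ ℂ),
    (∀ n : ℕ, f n = (inner ℂ ((adjoint (T ^ n) ∘L T ^ n) x) y : ℂ)) →
      (inner ℂ (A x) y : ℂ) = L f

/-!
For power bounded `T` the sequence `n ↦ ⟪T^n x, T^n y⟫` is bounded by `C²‖x‖‖y‖` and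
sesquilinear in `(x, y)`, so composing with `L` gives a bounded sesquilinear form, which the
Riesz representation theorem turns into a unique operator `A`. Positivity of `L` makes
`⟪A x, x⟫ = L (‖T^n x‖²)` real and nonnegative, and in a complex Hilbert space this already
forces `A` to be self-adjoint.
-/

namespace ContinuousLinearMap

variable {𝕜 E : Type*} [RCLike 𝕜] [NormedAddCommGroup E] [InnerProductSpace 𝕜 E]
  (T : E →L[𝕜] E) {C : ℝ} (hC : ∀ n : ℕ, ‖T ^ n‖ ≤ C)

include hC in
theorem norm_inner_pow_apply_le (x y : E) (n : ℕ) :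
    ‖inner 𝕜 ((T ^ n) x) ((T ^ n) y)‖ ≤ C * C * ‖x‖ * ‖y‖ := by
  have hx := (T ^ n).le_of_opNorm_le (hC n) x
  have hy := (T ^ n).le_of_opNorm_le (hC n) y
  calc ‖inner 𝕜 ((T ^ n) x) ((T ^ n) y)‖ ≤ ‖(T ^ n) x‖ * ‖(T ^ n) y‖ := norm_inner_le_norm _ _
    _ ≤ C * ‖x‖ * (C * ‖y‖) := mul_le_mul hx hy (norm_nonneg _) ((norm_nonneg _).trans hx)
    _ = C * C * ‖x‖ * ‖y‖ := by ring

noncomputable def powerInnerSeq (x y : E) : ℕ →ᵇ 𝕜 :=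
  .ofNormedAddCommGroupDiscrete (fun n => inner 𝕜 ((T ^ n) x) ((T ^ n) y))
    (C * C * ‖x‖ * ‖y‖) (norm_inner_pow_apply_le T hC x y)

@[simp]
theorem powerInnerSeq_apply (x y : E) (n : ℕ) :
    powerInnerSeq T hC x y n = inner 𝕜 ((T ^ n) x) ((T ^ n) y) := rfl

theorem norm_powerInnerSeq_le (x y : E) : ‖powerInnerSeq T hC x y‖ ≤ C * C * ‖x‖ * ‖y‖ := by
  have hC₀ : 0 ≤ C := (norm_nonneg _).trans (hC 0)
  exact BoundedContinuousFunction.norm_ofNormedAddCommGroup_le _ (by positivity)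
    (norm_inner_pow_apply_le T hC x y)

noncomputable def powerInnerForm : E →L⋆[𝕜] E →L[𝕜] (ℕ →ᵇ 𝕜) :=
  LinearMap.mkContinuous₂
    (LinearMap.mk₂'ₛₗ (starRingEnd 𝕜) (RingHom.id 𝕜) (powerInnerSeq T hC)
      (fun x x' y => by ext n; simp [inner_add_left])
      (fun c x y => by ext n; simp [inner_smul_left])
      (fun x y y' => by ext n; simp [inner_add_right])
      (fun c x y => by ext n; simp [inner_smul_right]))
    (C * C) (norm_powerInnerSeq_le T hC)

variable [CompleteSpace E]

noncomputable def asymptoticLimit (L : (ℕ →ᵇ 𝕜) →L[𝕜] 𝕜) : E →L[𝕜] E :=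
  InnerProductSpace.continuousLinearMapOfBilin
    ((compL 𝕜 E (ℕ →ᵇ 𝕜) 𝕜 L).comp (powerInnerForm T hC))

theorem inner_asymptoticLimit (L : (ℕ →ᵇ 𝕜) →L[𝕜] 𝕜) (x y : E) :
    inner 𝕜 (asymptoticLimit T hC L x) y = L (powerInnerSeq T hC x y) :=
  InnerProductSpace.continuousLinearMapOfBilin_apply _ x y

theorem eq_powerInnerSeq_iff (x y : E) (f : ℕ →ᵇ 𝕜) :
    f = powerInnerSeq T hC x y ↔ ∀ n : ℕ, f n = inner 𝕜 ((adjoint (T ^ n) ∘L T ^ n) x) y := by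
  simp only [BoundedContinuousFunction.ext_iff, powerInnerSeq_apply, comp_apply,
    adjoint_inner_left]

end ContinuousLinearMap

section BanachLimit

variable {H : Type*} [NormedAddCommGroup H] [InnerProductSpace ℂ H] [CompleteSpace H]
  {T : H →L[ℂ] H} {C : ℝ} (hC : ∀ n : ℕ, ‖T ^ n‖ ≤ C) {L : (ℕ →ᵇ ℂ) →L[ℂ] ℂ}

include hC in
theorem isLAsymptoticLimit_iff {A : H →L[ℂ] H} :
    IsLAsymptoticLimit L T A ↔
      A.IsPositive ∧ ∀ x y : H, inner ℂ (A x) y = L (T.powerInnerSeq hC x y) := by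
  simp only [IsLAsymptoticLimit, ← eq_powerInnerSeq_iff T hC, forall_eq]

theorem IsBanachLimit.isPositive_asymptoticLimit (hL : IsBanachLimit L) :
    (T.asymptoticLimit hC L).IsPositive := by
  refine (isPositive_iff_complex _).2 fun x => ?_
  obtain ⟨hre, him⟩ := hL.pos (T.powerInnerSeq hC x x) fun n =>
    ⟨inner_self_nonneg (𝕜 := ℂ), inner_self_im (𝕜 := ℂ) _⟩
  rw [inner_asymptoticLimit]
  exact ⟨Complex.conj_eq_iff_re.1 (Complex.conj_eq_iff_im.2 him), hre⟩

end BanachLimit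

/-- If `T` is power bounded and `L` is a Banach limit, then there exists a unique positive
operator `A` with `⟨A x, y⟩ = L-lim ⟨T*^n T^n x, y⟩` for all `x, y`. -/
theorem stmt4 {H : Type*} [NormedAddCommGroup H] [InnerProductSpace ℂ H] [CompleteSpace H]
    (T : H →L[ℂ] H) (hT : ∃ C : ℝ, ∀ n : ℕ, ‖T ^ n‖ ≤ C)
    (L : (ℕ →ᵇ ℂ) →L[ℂ] ℂ) (hL : IsBanachLimit L) :
    ∃! A : H →L[ℂ] H, IsLAsymptoticLimit L T A := by
  obtain ⟨C, hC⟩ := hT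
  simp only [isLAsymptoticLimit_iff hC]
  refine ⟨T.asymptoticLimit hC L,
    ⟨hL.isPositive_asymptoticLimit hC, inner_asymptoticLimit T hC L⟩, fun A hA => ?_⟩
  ext x
  exact ext_inner_right ℂ fun y => by rw [hA.2, inner_asymptoticLimit]
end

section
/- If T is an invertible operator on a Hilbert space such that both T and T^{-1} are power bounded, then T is similar to a unitary operator; conversely, if T is similar to a unitary operator then T is invertible and both T and T^{-1} are power bounded. -/
/-!
If `T` and `T⁻¹` are power bounded, a Banach limit of the bounded sequences `⟪Tⁿ x, Tⁿ y⟫`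
is a bounded sesquilinear form which is `T`-invariant (Banach limits are shift invariant) and
coercive (since `‖x‖ ≤ ‖T⁻ⁿ‖ ‖Tⁿ x‖`). Its representing operator `S` is therefore strictly
positive with `T* S T = S`, and for `X = S^{1/2}` the operator `X T X⁻¹` is unitary.
Conversely the powers of `X U X⁻¹` are `X Uⁿ X⁻¹`, bounded by `‖X‖ ‖X⁻¹‖`.
-/

open ContinuousLinearMap Filter Topology

section BanachLimit

local notation "𝒰" => (Ultrafilter.of (atTop : Filter ℕ) : Filter ℕ)

variable {E F : Type*} [NormedAddCommGroup E] [NormedSpace ℝ E]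
  [NormedAddCommGroup F] [NormedSpace ℝ F]

noncomputable def cesaroMean (a : ℕ → E) (N : ℕ) : E :=
  ((N : ℝ) + 1)⁻¹ • ∑ n ∈ Finset.range (N + 1), a n

/-- A Banach limit: the limit of the Cesàro means along a free ultrafilter, which makes it shift
invariant. Its value on an unbounded sequence is junk. -/
noncomputable def banachLim (a : ℕ → E) : E :=
  limUnder 𝒰 (cesaroMean a)

theorem cesaroMean_mem {K : Set E} (hK : Convex ℝ K) {a : ℕ → E} (ha : ∀ n, a n ∈ K) (N : ℕ) :
    cesaroMean a N ∈ K := by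
  rw [cesaroMean, Finset.smul_sum]
  refine hK.sum_mem (fun _ _ => by positivity) ?_ fun n _ => ha n
  rw [Finset.sum_const, Finset.card_range, nsmul_eq_mul]
  push_cast
  exact mul_inv_cancel₀ (by positivity)

theorem map_cesaroMean (L : E →L[ℝ] F) (a : ℕ → E) (N : ℕ) :
    cesaroMean (fun n => L (a n)) N = L (cesaroMean a N) := by
  simp only [cesaroMean, map_smul, map_sum]

theorem cesaroMean_succ_sub (a : ℕ → E) (N : ℕ) :
    cesaroMean (fun n => a (n + 1)) N - cesaroMean a N = ((N : ℝ) + 1)⁻¹ • (a (N + 1) - a 0) := by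
  rw [cesaroMean, cesaroMean, ← smul_sub, ← Finset.sum_sub_distrib, Finset.sum_range_sub]

variable [ProperSpace E] [ProperSpace F] {M : ℝ} {a : ℕ → E}

theorem tendsto_cesaroMean_banachLim (hM : ∀ n, ‖a n‖ ≤ M) :
    Tendsto (cesaroMean a) 𝒰 (𝓝 (banachLim a)) := by
  have hmem : ∀ N, cesaroMean a N ∈ Metric.closedBall 0 M := fun N =>
    cesaroMean_mem (convex_closedBall 0 M) (fun n => mem_closedBall_zero_iff.2 (hM n)) N
  obtain ⟨l, -, hl⟩ := (isCompact_closedBall (0 : E) M).ultrafilter_le_nhds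
    (Ultrafilter.map (cesaroMean a) (Ultrafilter.of atTop))
    (le_principal_iff.2 (Filter.univ_mem' (s := cesaroMean a ⁻¹' _) hmem))
  exact tendsto_nhds_limUnder ⟨l, hl⟩

theorem banachLim_mem {K : Set E} (hK : IsClosed K) (hKc : Convex ℝ K) (hM : ∀ n, ‖a n‖ ≤ M)
    (haK : ∀ n, a n ∈ K) : banachLim a ∈ K :=
  hK.mem_of_tendsto (tendsto_cesaroMean_banachLim hM) (.of_forall (cesaroMean_mem hKc haK))

theorem norm_banachLim_le (hM : ∀ n, ‖a n‖ ≤ M) : ‖banachLim a‖ ≤ M :=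
  mem_closedBall_zero_iff.1 <| banachLim_mem Metric.isClosed_closedBall (convex_closedBall 0 M) hM
    fun n => mem_closedBall_zero_iff.2 (hM n)

theorem banachLim_add {b : ℕ → E} {M' : ℝ} (hM : ∀ n, ‖a n‖ ≤ M) (hM' : ∀ n, ‖b n‖ ≤ M') :
    banachLim (a + b) = banachLim a + banachLim b := by
  have hab : ∀ n, ‖(a + b) n‖ ≤ M + M' := fun n =>
    (norm_add_le _ _).trans (add_le_add (hM n) (hM' n))
  refine tendsto_nhds_unique (tendsto_cesaroMean_banachLim hab) ?_
  have : cesaroMean (a + b) = cesaroMean a + cesaroMean b := by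
    ext N; simp only [cesaroMean, Pi.add_apply, Finset.sum_add_distrib, smul_add]
  rw [this]
  exact (tendsto_cesaroMean_banachLim hM).add (tendsto_cesaroMean_banachLim hM')

theorem map_banachLim (L : E →L[ℝ] F) (hM : ∀ n, ‖a n‖ ≤ M) :
    banachLim (fun n => L (a n)) = L (banachLim a) := by
  have hLa : ∀ n, ‖L (a n)‖ ≤ ‖L‖ * M := fun n => L.le_opNorm_of_le (hM n)
  refine tendsto_nhds_unique (tendsto_cesaroMean_banachLim hLa) ?_
  simp_rw [funext (map_cesaroMean L a)]
  exact (L.continuous.tendsto _).comp (tendsto_cesaroMean_banachLim hM)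

theorem banachLim_shift (hM : ∀ n, ‖a n‖ ≤ M) : banachLim (fun n => a (n + 1)) = banachLim a := by
  have hdiff : Tendsto (fun N : ℕ => cesaroMean (fun n => a (n + 1)) N - cesaroMean a N)
      atTop (𝓝 0) := by
    simp_rw [cesaroMean_succ_sub]
    refine squeeze_zero_norm (a := fun N : ℕ => ((N : ℝ) + 1)⁻¹ * (M + M)) (fun N => ?_) ?_
    · rw [norm_smul, norm_inv, Real.norm_of_nonneg (by positivity)]
      gcongr
      exact (norm_sub_le _ _).trans (add_le_add (hM _) (hM _))
    · simpa using tendsto_one_div_add_atTop_nhds_zero_nat.mul_const (M + M)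
  refine tendsto_nhds_unique (tendsto_cesaroMean_banachLim fun n => hM (n + 1)) ?_
  simpa using (tendsto_cesaroMean_banachLim hM).add (hdiff.mono_left (Ultrafilter.of_le _))

end BanachLimit

theorem InnerProductSpace.exists_inner_apply_eq_of_sesquilinear {𝕜 E : Type*} [RCLike 𝕜]
    [NormedAddCommGroup E] [InnerProductSpace 𝕜 E] [CompleteSpace E] (B : E → E → 𝕜)
    (hadd_left : ∀ x₁ x₂ y, B (x₁ + x₂) y = B x₁ y + B x₂ y)
    (hsmul_left : ∀ (c : 𝕜) x y, B (c • x) y = star c * B x y)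
    (hadd_right : ∀ x y₁ y₂, B x (y₁ + y₂) = B x y₁ + B x y₂)
    (hsmul_right : ∀ (c : 𝕜) x y, B x (c • y) = c * B x y)
    (C : ℝ) (hC : ∀ x y, ‖B x y‖ ≤ C * ‖x‖ * ‖y‖) :
    ∃ S : E →L[𝕜] E, ∀ x y, inner 𝕜 (S x) y = B x y :=
  ⟨continuousLinearMapOfBilin
      ((LinearMap.mk₂'ₛₗ (starRingEnd 𝕜) (RingHom.id 𝕜) B hadd_left hsmul_left hadd_right
        hsmul_right).mkContinuous₂ C hC),
    fun x y => continuousLinearMapOfBilin_apply _ x y⟩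

theorem ContinuousLinearMap.isStrictlyPositive_of_norm_sq_le_re_inner {H : Type*}
    [NormedAddCommGroup H] [InnerProductSpace ℂ H] [CompleteSpace H] {S : H →L[ℂ] H}
    {c : ℝ} (hc : 0 < c)
    (hS : ∀ x, (inner ℂ (S x) x).im = 0 ∧ ‖x‖ ^ 2 ≤ c * (inner ℂ (S x) x).re) :
    IsStrictlyPositive S := by
  refine (isStrictlyPositive_algebraMap (A := H →L[ℂ] H) (inv_pos.2 hc)).of_le ?_
  rw [le_def, isPositive_iff_complex]
  intro x
  obtain ⟨him, hre⟩ := hS x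
  have hx : inner ℂ ((S - algebraMap ℝ (H →L[ℂ] H) c⁻¹) x) x
      = inner ℂ (S x) x - (c⁻¹ * ‖x‖ ^ 2 : ℝ) := by
    simp [Algebra.algebraMap_eq_smul_one, inner_self_eq_norm_sq_to_K]
  rw [hx]
  refine ⟨Complex.ext (by simp) (by simp only [RCLike.re_to_complex, Complex.ofReal_im,
    Complex.sub_im, him, sub_zero]), ?_⟩
  rwa [RCLike.re_to_complex, Complex.sub_re, Complex.ofReal_re, sub_nonneg, inv_mul_le_iff₀ hc]

section OrbitForm

variable {H : Type*} [NormedAddCommGroup H] [InnerProductSpace ℂ H] {T : H →L[ℂ] H} {C : ℝ}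

/-- The `T`-invariant inner product `⟪x, y⟫_T = LIM ⟪Tⁿ x, Tⁿ y⟫` of Sz.-Nagy's proof. -/
noncomputable def orbitForm (T : H →L[ℂ] H) (x y : H) : ℂ :=
  banachLim fun n => inner ℂ ((T ^ n) x) ((T ^ n) y)

theorem norm_inner_pow_apply_le (hC : ∀ n, ‖T ^ n‖ ≤ C) (x y : H) (n : ℕ) :
    ‖inner ℂ ((T ^ n) x) ((T ^ n) y)‖ ≤ C ^ 2 * ‖x‖ * ‖y‖ :=
  calc _ ≤ ‖(T ^ n) x‖ * ‖(T ^ n) y‖ := norm_inner_le_norm _ _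
    _ ≤ (C * ‖x‖) * (C * ‖y‖) :=
      mul_le_mul ((T ^ n).le_of_opNorm_le (hC n) x) ((T ^ n).le_of_opNorm_le (hC n) y)
        (norm_nonneg _) (mul_nonneg ((norm_nonneg _).trans (hC 0)) (norm_nonneg x))
    _ = C ^ 2 * ‖x‖ * ‖y‖ := by ring

theorem norm_orbitForm_le (hC : ∀ n, ‖T ^ n‖ ≤ C) (x y : H) :
    ‖orbitForm T x y‖ ≤ C ^ 2 * ‖x‖ * ‖y‖ :=
  norm_banachLim_le (norm_inner_pow_apply_le hC x y)

theorem orbitForm_add_left (hC : ∀ n, ‖T ^ n‖ ≤ C) (x₁ x₂ y : H) :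
    orbitForm T (x₁ + x₂) y = orbitForm T x₁ y + orbitForm T x₂ y := by
  simp only [orbitForm, map_add, inner_add_left]
  exact banachLim_add (norm_inner_pow_apply_le hC x₁ y) (norm_inner_pow_apply_le hC x₂ y)

theorem orbitForm_add_right (hC : ∀ n, ‖T ^ n‖ ≤ C) (x y₁ y₂ : H) :
    orbitForm T x (y₁ + y₂) = orbitForm T x y₁ + orbitForm T x y₂ := by
  simp only [orbitForm, map_add, inner_add_right]
  exact banachLim_add (norm_inner_pow_apply_le hC x y₁) (norm_inner_pow_apply_le hC x y₂)

theorem orbitForm_smul_left (hC : ∀ n, ‖T ^ n‖ ≤ C) (c : ℂ) (x y : H) :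
    orbitForm T (c • x) y = star c * orbitForm T x y := by
  simp only [orbitForm, map_smul, inner_smul_left]
  exact map_banachLim (ContinuousLinearMap.mul ℝ ℂ (star c)) (norm_inner_pow_apply_le hC x y)

theorem orbitForm_smul_right (hC : ∀ n, ‖T ^ n‖ ≤ C) (c : ℂ) (x y : H) :
    orbitForm T x (c • y) = c * orbitForm T x y := by
  simp only [orbitForm, map_smul, inner_smul_right]
  exact map_banachLim (ContinuousLinearMap.mul ℝ ℂ c) (norm_inner_pow_apply_le hC x y)

theorem orbitForm_apply_apply (hC : ∀ n, ‖T ^ n‖ ≤ C) (x y : H) :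
    orbitForm T (T x) (T y) = orbitForm T x y := by
  have hpow : ∀ (n : ℕ) (v : H), (T ^ n) (T v) = (T ^ (n + 1)) v := fun n v => by
    rw [pow_succ, mul_apply_eq_comp]
  simp only [orbitForm, hpow]
  exact banachLim_shift (a := fun n => inner ℂ ((T ^ n) x) ((T ^ n) y))
    (norm_inner_pow_apply_le hC x y)

theorem orbitForm_self_im_eq_zero_and_norm_sq_le {T' : H →L[ℂ] H} {C' : ℝ} (hT'T : T' * T = 1)
    (hC : ∀ n, ‖T ^ n‖ ≤ C) (hC' : ∀ n, ‖T' ^ n‖ ≤ C') (x : H) :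
    (orbitForm T x x).im = 0 ∧ ‖x‖ ^ 2 ≤ C' ^ 2 * (orbitForm T x x).re := by
  refine banachLim_mem (K := {z : ℂ | z.im = 0 ∧ ‖x‖ ^ 2 ≤ C' ^ 2 * z.re})
    ((isClosed_eq Complex.continuous_im continuous_const).inter
      (isClosed_le continuous_const (continuous_const.mul Complex.continuous_re)))
    ((convex_hyperplane Complex.imLm.isLinear 0).inter
      (convex_halfSpace_ge (C' ^ 2 • Complex.reLm).isLinear (‖x‖ ^ 2)))
    (norm_inner_pow_apply_le hC x x)
    fun n => ⟨by rw [← RCLike.im_to_complex]; exact inner_self_im _, ?_⟩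
  have hx : ‖x‖ ≤ C' * ‖(T ^ n) x‖ :=
    calc ‖x‖ = ‖(T' ^ n) ((T ^ n) x)‖ := by
          rw [← mul_apply_eq_comp, pow_mul_pow_eq_one n hT'T, one_apply_eq_self]
      _ ≤ C' * ‖(T ^ n) x‖ := (T' ^ n).le_of_opNorm_le (hC' n) _
  calc ‖x‖ ^ 2 ≤ (C' * ‖(T ^ n) x‖) ^ 2 := pow_le_pow_left₀ (norm_nonneg x) hx 2
    _ = C' ^ 2 * (inner ℂ ((T ^ n) x) ((T ^ n) x)).re := by
      rw [mul_pow, ← RCLike.re_to_complex, inner_self_eq_norm_sq]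

variable [CompleteSpace H]

theorem exists_inner_apply_eq_orbitForm (hC : ∀ n, ‖T ^ n‖ ≤ C) :
    ∃ S : H →L[ℂ] H, ∀ x y, inner ℂ (S x) y = orbitForm T x y :=
  InnerProductSpace.exists_inner_apply_eq_of_sesquilinear (orbitForm T) (orbitForm_add_left hC)
    (orbitForm_smul_left hC) (orbitForm_add_right hC) (orbitForm_smul_right hC) (C ^ 2)
    (norm_orbitForm_le hC)

end OrbitForm

theorem exists_isStrictlyPositive_star_mul_mul_eq {H : Type*} [NormedAddCommGroup H]
    [InnerProductSpace ℂ H] [CompleteSpace H] {T T' : H →L[ℂ] H} {C C' : ℝ} (hT'T : T' * T = 1)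
    (hC : ∀ n, ‖T ^ n‖ ≤ C) (hC' : ∀ n, ‖T' ^ n‖ ≤ C') :
    ∃ S : H →L[ℂ] H, IsStrictlyPositive S ∧ star T * S * T = S := by
  obtain ⟨S, hS⟩ := exists_inner_apply_eq_orbitForm hC
  have hC'1 : ∀ n, ‖T' ^ n‖ ≤ max C' 1 := fun n => (hC' n).trans (le_max_left _ _)
  refine ⟨S, isStrictlyPositive_of_norm_sq_le_re_inner
    (pow_pos (lt_max_of_lt_right (b := C') one_pos) 2) fun x => ?_,
    ContinuousLinearMap.ext fun x => ext_inner_right ℂ fun y => ?_⟩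
  · rw [hS]
    exact orbitForm_self_im_eq_zero_and_norm_sq_le hT'T hC hC'1 x
  · rw [star_eq_adjoint, mul_apply_eq_comp, mul_apply_eq_comp, adjoint_inner_left, hS, hS,
      orbitForm_apply_apply hC]

theorem conj_mem_unitary_of_star_mul_mul_eq {M : Type*} [Monoid M] [StarMul M] (x t : Mˣ)
    (hx : IsSelfAdjoint (x : M)) (ht : star (t : M) * (x * x) * t = x * x) :
    ((x * t * x⁻¹ : Mˣ) : M) ∈ unitary M := by
  set u := x * t * x⁻¹
  have hxs : star x = x := Units.ext hx
  have hts : star t * (x * x) * t = x * x := Units.ext (by simpa using ht)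
  have hu : star u * u = 1 := by
    calc star u * u = x⁻¹ * (star t * (x * x) * t) * x⁻¹ := by
          simp only [u, star_mul, star_inv, hxs]; group
      _ = 1 := by rw [hts]; group
  have hu' : u * star u = 1 := by rw [eq_inv_of_mul_eq_one_left hu, mul_inv_cancel]
  exact Unitary.mem_iff.2 ⟨by rw [← Units.coe_star, ← Units.val_mul, hu, Units.val_one],
    by rw [← Units.coe_star, ← Units.val_mul, hu', Units.val_one]⟩

theorem exists_conj_mem_unitary {A : Type*} [CStarAlgebra A] [PartialOrder A] [StarOrderedRing A]
    {s : A} (hs : IsStrictlyPositive s) (t : Aˣ) (ht : star (t : A) * s * t = s) :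
    ∃ x : Aˣ, ((x * t * x⁻¹ : Aˣ) : A) ∈ unitary A :=
  ⟨hs.isUnit_cfcSqrt.unit, conj_mem_unitary_of_star_mul_mul_eq _ _
    (CFC.sqrt_nonneg s).isSelfAdjoint (by simpa [CFC.sqrt_mul_sqrt_self s hs.nonneg] using ht)⟩

theorem norm_pow_conj_unitary_le {A : Type*} [NormedRing A] [StarRing A] [CStarRing A] (x : Aˣ)
    {u : A} (hu : u ∈ unitary A) (n : ℕ) :
    ‖((x : A) * u * ↑x⁻¹) ^ n‖ ≤ ‖(x : A)‖ * ‖(↑x⁻¹ : A)‖ := by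
  rw [Units.conj_pow, mul_assoc]
  exact (norm_mul_le _ _).trans_eq (by rw [CStarRing.norm_mem_unitary_mul _ (pow_mem hu n)])

theorem conj_mul_conj_star_of_mem_unitary {M : Type*} [Monoid M] [StarMul M] (x : Mˣ) {u : M}
    (hu : u ∈ unitary M) : (x * u * ↑x⁻¹) * (x * star u * ↑x⁻¹) = 1 := by
  simp only [mul_assoc, Units.inv_mul_cancel_left]
  rw [← mul_assoc u, Unitary.mul_star_self_of_mem hu, one_mul, Units.mul_inv]

/-- Sz.-Nagy's theorem: `T` is similar to a unitary operator if and only if `T` is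
invertible and both `T` and `T⁻¹` are power bounded. -/
theorem stmt7 {H : Type*} [NormedAddCommGroup H] [InnerProductSpace ℂ H] [CompleteSpace H]
    (T : H →L[ℂ] H) :
    (∃ X X' U : H →L[ℂ] H, X ∘L X' = 1 ∧ X' ∘L X = 1 ∧
        U ∈ unitary (H →L[ℂ] H) ∧ T = X ∘L U ∘L X') ↔
    (∃ T' : H →L[ℂ] H, T ∘L T' = 1 ∧ T' ∘L T = 1 ∧
        (∃ C : ℝ, ∀ n : ℕ, ‖T ^ n‖ ≤ C) ∧ (∃ C : ℝ, ∀ n : ℕ, ‖T' ^ n‖ ≤ C)) := by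
  constructor
  · rintro ⟨X, X', U, hXX', hX'X, hU, rfl⟩
    obtain ⟨x, rfl, rfl⟩ : ∃ x : (H →L[ℂ] H)ˣ, ↑x = X ∧ ↑x⁻¹ = X' :=
      ⟨⟨X, X', hXX', hX'X⟩, rfl, rfl⟩
    have hstar := conj_mul_conj_star_of_mem_unitary x (Unitary.star_mem hU)
    rw [star_star] at hstar
    simp only [← mul_def, ← mul_assoc (x : H →L[ℂ] H)]
    exact ⟨_, conj_mul_conj_star_of_mem_unitary x hU, hstar, ⟨_, norm_pow_conj_unitary_le x hU⟩,
      ⟨_, norm_pow_conj_unitary_le x (Unitary.star_mem hU)⟩⟩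
  · rintro ⟨T', hTT', hT'T, ⟨C, hC⟩, ⟨C', hC'⟩⟩
    obtain ⟨S, hS, hTS⟩ := exists_isStrictlyPositive_star_mul_mul_eq hT'T hC hC'
    obtain ⟨x, hx⟩ := exists_conj_mem_unitary hS ⟨T, T', hTT', hT'T⟩ hTS
    refine ⟨↑x⁻¹, x, _, x.inv_mul, x.mul_inv, hx, ?_⟩
    change T = ↑x⁻¹ * (x * T * ↑x⁻¹ * x)
    simp [mul_assoc]
end

section
/- A power bounded operator T on a Hilbert space is similar to an isometry if and only if there exists a constant c > 0 such that ‖T^n x‖ ≥ c ‖x‖ for every x ∈ H and every n ∈ ℕ. -/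
/-!
If `T = X⁻¹ V X` with `V` an isometry, then `‖x‖ ≤ ‖X⁻¹‖ ‖X‖ ‖Tⁿ x‖`. Conversely, an
invertible `X` with `X T X⁻¹` an isometry is the same as a positive invertible `S = X* X` with
`T* S T = S`. Such an `S` is obtained as a weak-operator limit, along a free ultrafilter, of the
Cesàro means `(N + 1)⁻¹ ∑_{n ≤ N} (Tⁿ)* Tⁿ`: power boundedness keeps these means bounded, which
gives the limit and makes `T* (·) T` change them by `O(1 / N)`; the lower bound
`‖Tⁿ x‖ ≥ c ‖x‖` makes the limit coercive, hence invertible.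
-/

open ContinuousLinearMap Filter Topology Finset
open scoped InnerProductSpace ComplexConjugate

theorem Ultrafilter.exists_tendsto_of_norm_le {ι E : Type*} [NormedAddCommGroup E]
    [ProperSpace E] (U : Ultrafilter ι) {f : ι → E} {R : ℝ} (hf : ∀ i, ‖f i‖ ≤ R) :
    ∃ b, Tendsto f U (𝓝 b) := by
  have hU : ↑(U.map f) ≤ 𝓟 (Metric.closedBall (0 : E) R) := by
    rw [Ultrafilter.coe_map, le_principal_iff]
    exact mem_map.mpr (univ_mem' fun i => mem_closedBall_zero_iff.mpr (hf i))
  obtain ⟨b, -, hb⟩ := (isCompact_closedBall (0 : E) R).ultrafilter_le_nhds _ hU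
  exact ⟨b, hb⟩

section CesaroGram

variable {A : Type*} [Ring A] [StarRing A] [Algebra ℂ A]

noncomputable def cesaroGram (a : A) (N : ℕ) : A :=
  ((N + 1 : ℕ) : ℂ)⁻¹ • ∑ n ∈ range (N + 1), star (a ^ n) * a ^ n

theorem isSelfAdjoint_cesaroGram [StarModule ℂ A] (a : A) (N : ℕ) :
    IsSelfAdjoint (cesaroGram a N) :=
  .smul (IsSelfAdjoint.natCast _).inv₀ (isSelfAdjoint_sum _ fun n _ => .star_mul_self (a ^ n))

theorem star_mul_cesaroGram_mul_sub (a : A) (N : ℕ) :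
    star a * cesaroGram a N * a - cesaroGram a N =
      ((N + 1 : ℕ) : ℂ)⁻¹ • (star (a ^ (N + 1)) * a ^ (N + 1) - 1) := by
  have hshift : ∀ n, star a * (star (a ^ n) * a ^ n) * a = star (a ^ (n + 1)) * a ^ (n + 1) :=
    fun n => by simp only [pow_succ, star_mul, mul_assoc]
  simp only [cesaroGram, mul_smul_comm, smul_mul_assoc, mul_sum, sum_mul, hshift, ← smul_sub,
    ← sum_sub_distrib, sum_range_sub (fun n => star (a ^ n) * a ^ n), pow_zero, star_one,
    one_mul]

end CesaroGram

section CesaroGramNorm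

variable {A : Type*} [NormedRing A] [StarRing A] [CStarRing A]

theorem norm_star_pow_mul_pow_le {a : A} {C : ℝ} (hC : ∀ n, ‖a ^ n‖ ≤ C) (n : ℕ) :
    ‖star (a ^ n) * a ^ n‖ ≤ C ^ 2 := by
  rw [CStarRing.norm_star_mul_self, ← sq]
  exact pow_le_pow_left₀ (norm_nonneg _) (hC n) 2

theorem norm_cesaroGram_le [NormedAlgebra ℂ A] {a : A} {C : ℝ} (hC : ∀ n, ‖a ^ n‖ ≤ C) (N : ℕ) :
    ‖cesaroGram a N‖ ≤ C ^ 2 :=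
  calc ‖cesaroGram a N‖
      ≤ ((N + 1 : ℕ) : ℝ)⁻¹ * ∑ n ∈ range (N + 1), ‖star (a ^ n) * a ^ n‖ := by
        rw [cesaroGram, norm_smul, norm_inv, Complex.norm_natCast]
        gcongr
        exact norm_sum_le _ _
    _ ≤ ((N + 1 : ℕ) : ℝ)⁻¹ * ∑ n ∈ range (N + 1), C ^ 2 := by
        gcongr with n
        exact norm_star_pow_mul_pow_le hC n
    _ = C ^ 2 := by simp [field]

theorem tendsto_star_mul_cesaroGram_mul_sub [NormedAlgebra ℂ A] {a : A} {C : ℝ}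
    (hC : ∀ n, ‖a ^ n‖ ≤ C) :
    Tendsto (fun N => star a * cesaroGram a N * a - cesaroGram a N) atTop (𝓝 0) := by
  simp_rw [star_mul_cesaroGram_mul_sub]
  refine squeeze_zero_norm (a := fun N : ℕ => ((N + 1 : ℕ) : ℝ)⁻¹ * (C ^ 2 + ‖(1 : A)‖))
    (fun N => ?_) ?_
  · rw [norm_smul, norm_inv, Complex.norm_natCast]
    gcongr
    exact (norm_sub_le _ _).trans (by gcongr; exact norm_star_pow_mul_pow_le hC _)
  · simpa using (tendsto_inv_atTop_zero.comp
      (tendsto_natCast_atTop_atTop.atTop_add tendsto_const_nhds)).mul_const (C ^ 2 + ‖(1 : A)‖)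

end CesaroGramNorm

theorem exists_unit_star_conj_mul_self_eq_one {A : Type*} [CStarAlgebra A] [PartialOrder A]
    [StarOrderedRing A] {S T : A} (hS : IsStrictlyPositive S) (hT : star T * S * T = S) :
    ∃ u : Aˣ, star (↑u * T * ↑u⁻¹) * (↑u * T * ↑u⁻¹) = 1 := by
  obtain ⟨u, hu⟩ := CFC.isUnit_sqrt_iff_isStrictlyPositive.mpr hS
  have hSu : star (u : A) * u = S := by
    rw [hu, (CFC.sqrt_nonneg S).isSelfAdjoint.star_eq, CFC.sqrt_mul_sqrt_self S hS.nonneg]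
  refine ⟨u, ?_⟩
  calc star (↑u * T * ↑u⁻¹) * (↑u * T * ↑u⁻¹)
      = star (↑u⁻¹ : A) * (star T * (star (u : A) * u) * T) * ↑u⁻¹ := by
        simp only [star_mul, mul_assoc]
    _ = star (↑u * ↑u⁻¹ : A) * (↑u * ↑u⁻¹) := by
        rw [hSu, hT, ← hSu]
        simp only [star_mul, mul_assoc]
    _ = 1 := by simp

namespace ContinuousLinearMap

theorem exists_pos_mul_norm_le_norm_pow_apply_of_isometry {𝕜 E : Type*}
    [NontriviallyNormedField 𝕜] [NormedAddCommGroup E] [NormedSpace 𝕜 E] {X X' V : E →L[𝕜] E}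
    (hXX' : X ∘L X' = 1) (hX'X : X' ∘L X = 1) (hV : ∀ x, ‖V x‖ = ‖x‖) :
    ∃ c : ℝ, 0 < c ∧ ∀ (x : E) (n : ℕ), c * ‖x‖ ≤ ‖((X' ∘L V ∘L X) ^ n) x‖ := by
  set T := X' ∘L V ∘L X
  have hVn : ∀ (n : ℕ) (y : E), ‖(V ^ n) y‖ = ‖y‖ := by
    intro n
    induction n with
    | zero => simp
    | succ n ih => intro y; rw [pow_succ', mul_apply_eq_comp, hV, ih]
  have hconj : ∀ n, X * T ^ n = V ^ n * X := fun n =>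
    SemiconjBy.pow_right (by ext x; simpa [T] using congr($hXX' (V (X x)))) n
  refine ⟨(‖X'‖ * ‖X‖ + 1)⁻¹, by positivity, fun x n => ?_⟩
  rw [inv_mul_le_iff₀ (by positivity)]
  calc ‖x‖ = ‖X' (X x)‖ := by simpa using congr(‖$hX'X x‖).symm
    _ ≤ ‖X'‖ * ‖(V ^ n) (X x)‖ := by rw [hVn]; exact X'.le_opNorm _
    _ = ‖X'‖ * ‖X ((T ^ n) x)‖ := by
        rw [← mul_apply_eq_comp, ← hconj, mul_apply_eq_comp]
    _ ≤ ‖X'‖ * (‖X‖ * ‖(T ^ n) x‖) := by gcongr; exact X.le_opNorm _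
    _ ≤ (‖X'‖ * ‖X‖ + 1) * ‖(T ^ n) x‖ := by nlinarith [norm_nonneg ((T ^ n) x)]

section RCLike

variable {𝕜 E ι : Type*} [RCLike 𝕜] [NormedAddCommGroup E] [InnerProductSpace 𝕜 E]
  [CompleteSpace E]

theorem exists_tendsto_inner_of_norm_le (U : Ultrafilter ι) (A : ι → E →L[𝕜] E) {M : ℝ}
    (hA : ∀ i, ‖A i‖ ≤ M) :
    ∃ S : E →L[𝕜] E, ∀ x y, Tendsto (fun i => ⟪A i x, y⟫_𝕜) U (𝓝 ⟪S x, y⟫_𝕜) := by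
  have hbound : ∀ i x y, ‖⟪A i x, y⟫_𝕜‖ ≤ M * ‖x‖ * ‖y‖ := fun i x y =>
    (norm_inner_le_norm _ _).trans <| mul_le_mul_of_nonneg_right
      ((A i).le_of_opNorm_le (hA i) x) (norm_nonneg y)
  choose B hB using fun x y => U.exists_tendsto_of_norm_le (hbound · x y)
  let b : E →L⋆[𝕜] E →L[𝕜] 𝕜 := LinearMap.mkContinuous₂ (LinearMap.mk₂'ₛₗ _ _ B
    (fun x x' y => tendsto_nhds_unique (hB _ y) <| by
      simpa only [map_add, inner_add_left] using (hB x y).add (hB x' y))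
    (fun a x y => tendsto_nhds_unique (hB _ y) <| by
      simpa only [map_smul, inner_smul_left, smul_eq_mul] using (hB x y).const_mul (conj a))
    (fun x y y' => tendsto_nhds_unique (hB x _) <| by
      simpa only [inner_add_right] using (hB x y).add (hB x y'))
    (fun a x y => tendsto_nhds_unique (hB x _) <| by
      simpa only [inner_smul_right, RingHom.id_apply, smul_eq_mul] using (hB x y).const_mul a))
    M fun x y => le_of_tendsto (hB x y).norm (.of_forall fun i => hbound i x y)
  exact ⟨InnerProductSpace.continuousLinearMapOfBilin b, fun x y => by simpa [b] using hB x y⟩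

theorem star_mul_mul_eq_of_tendsto_inner {l : Filter ι} [l.NeBot] {A : ι → E →L[𝕜] E}
    {S T : E →L[𝕜] E} (hS : ∀ x y, Tendsto (fun i => ⟪A i x, y⟫_𝕜) l (𝓝 ⟪S x, y⟫_𝕜))
    (hT : Tendsto (fun i => star T * A i * T - A i) l (𝓝 0)) : star T * S * T = S := by
  ext x
  refine ext_inner_right 𝕜 fun y => ?_
  have hdiff : Tendsto (fun i => ⟪(star T * A i * T - A i) x, y⟫_𝕜) l (𝓝 0) := by
    simpa using (((apply 𝕜 E x).continuous.tendsto _).comp hT).inner (tendsto_const_nhds (x := y))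
  refine tendsto_nhds_unique (f := fun i => ⟪A i (T x), T y⟫_𝕜) (l := l) ?_ ?_
  · simpa [star_eq_adjoint, adjoint_inner_left] using hS (T x) (T y)
  · simpa [star_eq_adjoint, adjoint_inner_left, inner_sub_left] using (hS x y).add hdiff

theorem isStrictlyPositive_of_le_re_inner {S : E →L[𝕜] E} (hS : S.IsSymmetric) {c : ℝ}
    (hc : 0 < c) (h : ∀ x, c * ‖x‖ ^ 2 ≤ RCLike.re ⟪S x, x⟫_𝕜) : IsStrictlyPositive S := by
  have hpos : ∀ x, 0 ≤ RCLike.re ⟪S x, x⟫_𝕜 := fun x =>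
    (by positivity : 0 ≤ c * ‖x‖ ^ 2).trans (h x)
  refine ⟨(nonneg_iff_isPositive S).mpr ⟨hS, hpos⟩,
    isUnit_of_forall_le_norm_inner_map S (c := ⟨c, hc.le⟩) hc fun x => ?_⟩
  calc ‖x‖ ^ 2 * c = c * ‖x‖ ^ 2 := mul_comm _ _
    _ ≤ RCLike.re ⟪S x, x⟫_𝕜 := h x
    _ ≤ ‖⟪S x, x⟫_𝕜‖ := RCLike.re_le_norm _

end RCLike

variable {H : Type*} [NormedAddCommGroup H] [InnerProductSpace ℂ H] [CompleteSpace H]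

theorem inner_cesaroGram_apply_self (T : H →L[ℂ] H) (N : ℕ) (x : H) :
    ⟪cesaroGram T N x, x⟫_ℂ =
      (((N + 1 : ℕ) : ℝ)⁻¹ * ∑ n ∈ range (N + 1), ‖(T ^ n) x‖ ^ 2 : ℝ) := by
  simp only [cesaroGram, smul_apply, _root_.sum_apply, inner_smul_left, sum_inner,
    mul_apply_eq_comp, star_eq_adjoint, adjoint_inner_left, inner_self_eq_norm_sq_to_K]
  push_cast
  simp

theorem sq_le_re_inner_cesaroGram_apply_self {T : H →L[ℂ] H} {x : H} {r : ℝ} (hr : 0 ≤ r)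
    (h : ∀ n, r ≤ ‖(T ^ n) x‖) (N : ℕ) : r ^ 2 ≤ RCLike.re ⟪cesaroGram T N x, x⟫_ℂ := by
  rw [inner_cesaroGram_apply_self, RCLike.re_to_complex, Complex.ofReal_re,
    le_inv_mul_iff₀ (by positivity)]
  calc ((N + 1 : ℕ) : ℝ) * r ^ 2 = ∑ n ∈ range (N + 1), r ^ 2 := by simp
    _ ≤ ∑ n ∈ range (N + 1), ‖(T ^ n) x‖ ^ 2 := by gcongr with n; exact h n

theorem exists_isStrictlyPositive_star_mul_mul_eq {T : H →L[ℂ] H} {C c : ℝ}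
    (hC : ∀ n, ‖T ^ n‖ ≤ C) (hc : 0 < c) (hlow : ∀ x n, c * ‖x‖ ≤ ‖(T ^ n) x‖) :
    ∃ S : H →L[ℂ] H, IsStrictlyPositive S ∧ star T * S * T = S := by
  let U := hyperfilter ℕ
  have hU : (U : Filter ℕ) ≤ atTop := Nat.cofinite_eq_atTop ▸ hyperfilter_le_cofinite
  obtain ⟨S, hS⟩ := exists_tendsto_inner_of_norm_le U (cesaroGram T) (norm_cesaroGram_le hC)
  refine ⟨S, isStrictlyPositive_of_le_re_inner (fun x y => ?_) (pow_pos hc 2) fun x => ?_,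
    star_mul_mul_eq_of_tendsto_inner hS ((tendsto_star_mul_cesaroGram_mul_sub hC).mono_left hU)⟩
  · refine tendsto_nhds_unique (hS x y) ?_
    have hconj := (hS y x).star
    simp only [RCLike.star_def, inner_conj_symm] at hconj
    exact hconj.congr fun N => ((isSelfAdjoint_cesaroGram T N).isSymmetric x y).symm
  · rw [← mul_pow]
    exact ge_of_tendsto ((RCLike.continuous_re.tendsto _).comp (hS x x)) <| .of_forall
      (sq_le_re_inner_cesaroGram_apply_self (by positivity) (hlow x))

end ContinuousLinearMap

/-- A power bounded operator `T` is similar to an isometry if and only if there is a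
constant `c > 0` such that `‖T^n x‖ ≥ c ‖x‖` for every `x` and every `n`. -/
theorem stmt8 {H : Type*} [NormedAddCommGroup H] [InnerProductSpace ℂ H] [CompleteSpace H]
    (T : H →L[ℂ] H) (hT : ∃ C : ℝ, ∀ n : ℕ, ‖T ^ n‖ ≤ C) :
    (∃ X X' V : H →L[ℂ] H, X ∘L X' = 1 ∧ X' ∘L X = 1 ∧
        (∀ x : H, ‖V x‖ = ‖x‖) ∧ T = X' ∘L V ∘L X) ↔
    (∃ c : ℝ, 0 < c ∧ ∀ (x : H) (n : ℕ), c * ‖x‖ ≤ ‖(T ^ n) x‖) := by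
  constructor
  · rintro ⟨X, X', V, hXX', hX'X, hV, rfl⟩
    exact exists_pos_mul_norm_le_norm_pow_apply_of_isometry hXX' hX'X hV
  · rintro ⟨c, hc, hlow⟩
    obtain ⟨C, hC⟩ := hT
    obtain ⟨S, hS, hTS⟩ := exists_isStrictlyPositive_star_mul_mul_eq hC hc hlow
    obtain ⟨u, hu⟩ := exists_unit_star_conj_mul_self_eq_one hS hTS
    refine ⟨u, ↑u⁻¹, ↑u * T * ↑u⁻¹, u.mul_inv, u.inv_mul,
      (norm_map_iff_adjoint_comp_self _).mpr (by rw [← star_eq_adjoint]; exact hu), ?_⟩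
    simp [← ContinuousLinearMap.mul_def, mul_assoc]
end

section
/- For a power bounded operator T and a Banach limit L, the L-asymptotic limit A_{T,L} is invertible if and only if there exists c > 0 with ‖T^n x‖ ≥ c‖x‖ for all x ∈ H and n ∈ ℕ. -/
/-!
Power boundedness makes `n ↦ ⟪T^n x, T^n y⟫` a bounded sequence with `L`-limit `⟪A x, y⟫`, and
shift invariance of `L` gives `⟪A T^m x, T^m y⟫ = ⟪A x, y⟫`. A positive operator is invertible
iff it is coercive, `r ‖x‖² ≤ re ⟪A x, x⟫` with `r > 0`. Coercivity of `A` passes to the iterates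
through `r ‖x‖² ≤ re ⟪A T^n x, T^n x⟫ ≤ ‖A‖ ‖T^n x‖²`; conversely a uniform lower bound
`c ‖x‖ ≤ ‖T^n x‖` passes through the positive functional `L` to `c² ‖x‖² ≤ ⟪A x, x⟫`.
-/

open ContinuousLinearMap Filter Topology BoundedContinuousFunction

open scoped InnerProductSpace ComplexOrder

lemma ContinuousLinearMap.re_inner_map_self_le {𝕜 E : Type*} [RCLike 𝕜] [NormedAddCommGroup E]
    [InnerProductSpace 𝕜 E] (A : E →L[𝕜] E) (x : E) : RCLike.re ⟪A x, x⟫_𝕜 ≤ ‖A‖ * ‖x‖ ^ 2 :=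
  calc RCLike.re ⟪A x, x⟫_𝕜 ≤ ‖A x‖ * ‖x‖ := (RCLike.re_le_norm _).trans (norm_inner_le_norm _ _)
    _ ≤ ‖A‖ * ‖x‖ * ‖x‖ := by gcongr; exact A.le_opNorm x
    _ = ‖A‖ * ‖x‖ ^ 2 := by ring

lemma ContinuousLinearMap.IsPositive.isUnit_iff_exists_pos_mul_norm_sq_le
    {H : Type*} [NormedAddCommGroup H] [InnerProductSpace ℂ H] [CompleteSpace H]
    {A : H →L[ℂ] H} (hA : A.IsPositive) :
    IsUnit A ↔ ∃ r : ℝ, 0 < r ∧ ∀ x, r * ‖x‖ ^ 2 ≤ RCLike.re ⟪A x, x⟫_ℂ := by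
  constructor
  · intro hu
    rcases subsingleton_or_nontrivial H with hH | hH
    · exact ⟨1, one_pos, fun x => by simp [Subsingleton.elim x 0]⟩
    -- the spectrum of `A` is a compact subset of `(0, ∞)`, so `r ≤ A` for some `r > 0`
    have hpos : IsStrictlyPositive A := hu.isStrictlyPositive ((nonneg_iff_isPositive A).2 hA)
    obtain ⟨r, hr, hle⟩ := (CFC.exists_pos_algebraMap_le_iff hpos.isSelfAdjoint).2
      fun x hx => hpos.spectrum_pos hx
    refine ⟨r, hr, fun x => ?_⟩
    have := ((le_def _ _).1 hle).re_inner_nonneg_left x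
    rwa [_root_.sub_apply, inner_sub_left, map_sub, sub_nonneg, Algebra.algebraMap_eq_smul_one,
      _root_.smul_apply, one_apply_eq_self, inner_smul_left_eq_smul, RCLike.smul_re,
      inner_self_eq_norm_sq] at this
  · rintro ⟨r, hr, h⟩
    refine isUnit_of_forall_le_norm_inner_map A (c := ⟨r, hr.le⟩) hr fun x => ?_
    calc ‖x‖ ^ 2 * r = r * ‖x‖ ^ 2 := mul_comm _ _
      _ ≤ RCLike.re ⟪A x, x⟫_ℂ := h x
      _ ≤ ‖⟪A x, x⟫_ℂ‖ := RCLike.re_le_norm _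

namespace IsBanachLimit

variable {L : (ℕ →ᵇ ℂ) →L[ℂ] ℂ}

lemma map_eq_of_apply_add (hL : IsBanachLimit L) (m : ℕ) {f g : ℕ →ᵇ ℂ}
    (h : ∀ n, g n = f (n + m)) : L g = L f := by
  induction m generalizing f with
  | zero => exact congrArg L (ext h)
  | succ m ih => rw [ih (f := f.compContinuous natShift) h, hL.shift_inv]

lemma map_const (hL : IsBanachLimit L) (a : ℂ) : L (const ℕ a) = a :=
  hL.lim_eq _ _ tendsto_const_nhds

lemma map_mono (hL : IsBanachLimit L) {f g : ℕ →ᵇ ℂ} (h : ∀ n, f n ≤ g n) : L f ≤ L g := by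
  have := hL.pos (g - f) fun n => Complex.nonneg_iff.1 (sub_nonneg.2 (h n)) |>.imp_right Eq.symm
  rw [map_sub] at this
  exact sub_nonneg.1 (Complex.nonneg_iff.2 (this.imp_right Eq.symm))

end IsBanachLimit

section PowerBounded

variable {H : Type*} [NormedAddCommGroup H] [InnerProductSpace ℂ H] {T : H →L[ℂ] H} {C : ℝ}

noncomputable def powInnerSeq (T : H →L[ℂ] H) (hC : ∀ n : ℕ, ‖T ^ n‖ ≤ C) (x y : H) : ℕ →ᵇ ℂ :=
  ofNormedAddCommGroup (fun n => ⟪(T ^ n) x, (T ^ n) y⟫_ℂ) continuous_of_discreteTopology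
    (C ^ 2 * (‖x‖ * ‖y‖)) fun n => calc
      ‖⟪(T ^ n) x, (T ^ n) y⟫_ℂ‖ ≤ ‖(T ^ n) x‖ * ‖(T ^ n) y‖ := norm_inner_le_norm _ _
      _ ≤ (‖T ^ n‖ * ‖x‖) * (‖T ^ n‖ * ‖y‖) := by gcongr <;> exact le_opNorm _ _
      _ = ‖T ^ n‖ ^ 2 * (‖x‖ * ‖y‖) := by ring
      _ ≤ C ^ 2 * (‖x‖ * ‖y‖) := by gcongr; exact hC n

@[simp]
lemma powInnerSeq_apply (hC : ∀ n : ℕ, ‖T ^ n‖ ≤ C) (x y : H) (n : ℕ) :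
    powInnerSeq T hC x y n = ⟪(T ^ n) x, (T ^ n) y⟫_ℂ :=
  rfl

namespace IsLAsymptoticLimit

variable [CompleteSpace H] {L : (ℕ →ᵇ ℂ) →L[ℂ] ℂ} {A : H →L[ℂ] H}

lemma inner_eq_map_powInnerSeq (hA : IsLAsymptoticLimit L T A) (hC : ∀ n : ℕ, ‖T ^ n‖ ≤ C)
    (x y : H) : ⟪A x, y⟫_ℂ = L (powInnerSeq T hC x y) :=
  hA.2 x y _ fun n => by rw [powInnerSeq_apply, ContinuousLinearMap.comp_apply, adjoint_inner_left]

lemma inner_map_pow_map_pow (hA : IsLAsymptoticLimit L T A) (hL : IsBanachLimit L)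
    (hC : ∀ n : ℕ, ‖T ^ n‖ ≤ C) (m : ℕ) (x y : H) :
    ⟪A ((T ^ m) x), (T ^ m) y⟫_ℂ = ⟪A x, y⟫_ℂ := by
  rw [hA.inner_eq_map_powInnerSeq hC, hA.inner_eq_map_powInnerSeq hC]
  exact hL.map_eq_of_apply_add m fun n => by
    rw [powInnerSeq_apply, powInnerSeq_apply, pow_add]
    rfl

lemma exists_pos_mul_norm_sq_le_iff (hA : IsLAsymptoticLimit L T A) (hL : IsBanachLimit L)
    (hC : ∀ n : ℕ, ‖T ^ n‖ ≤ C) :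
    (∃ r : ℝ, 0 < r ∧ ∀ x, r * ‖x‖ ^ 2 ≤ RCLike.re ⟪A x, x⟫_ℂ) ↔
      ∃ c : ℝ, 0 < c ∧ ∀ (x : H) (n : ℕ), c * ‖x‖ ≤ ‖(T ^ n) x‖ := by
  constructor
  · rintro ⟨r, hr, h⟩
    -- `‖A‖ + 1` rather than `‖A‖`, which vanishes when `H` is trivial
    refine ⟨√(r / (‖A‖ + 1)), by positivity, fun x n => ?_⟩
    have hsq : r * ‖x‖ ^ 2 ≤ (‖A‖ + 1) * ‖(T ^ n) x‖ ^ 2 := calc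
      r * ‖x‖ ^ 2 ≤ RCLike.re ⟪A ((T ^ n) x), (T ^ n) x⟫_ℂ := by
        rw [hA.inner_map_pow_map_pow hL hC]; exact h x
      _ ≤ ‖A‖ * ‖(T ^ n) x‖ ^ 2 := A.re_inner_map_self_le _
      _ ≤ (‖A‖ + 1) * ‖(T ^ n) x‖ ^ 2 := by gcongr; linarith
    rw [← pow_le_pow_iff_left₀ (by positivity) (norm_nonneg _) two_ne_zero, mul_pow,
      Real.sq_sqrt (by positivity), div_mul_eq_mul_div, div_le_iff₀ (by positivity)]
    linarith
  · rintro ⟨c, hc, h⟩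
    refine ⟨c ^ 2, by positivity, fun x => ?_⟩
    have hle : (((c * ‖x‖) ^ 2 : ℝ) : ℂ) ≤ ⟪A x, x⟫_ℂ := by
      rw [hA.inner_eq_map_powInnerSeq hC, ← hL.map_const (((c * ‖x‖) ^ 2 : ℝ) : ℂ)]
      refine hL.map_mono fun n => ?_
      rw [powInnerSeq_apply, inner_self_eq_norm_sq_to_K, ← RCLike.ofReal_pow]
      exact Complex.real_le_real.2 (pow_le_pow_left₀ (by positivity) (h x n) 2)
    have := (Complex.le_def.1 hle).1
    rwa [Complex.ofReal_re, mul_pow] at this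

end IsLAsymptoticLimit

end PowerBounded

/-- For a power bounded `T` and a Banach limit `L`, the `L`-asymptotic limit `A_{T,L}`
is invertible if and only if there is `c > 0` with `‖T^n x‖ ≥ c ‖x‖` for all `x, n`. -/
theorem stmt9 {H : Type*} [NormedAddCommGroup H] [InnerProductSpace ℂ H] [CompleteSpace H]
    (T : H →L[ℂ] H) (hT : ∃ C : ℝ, ∀ n : ℕ, ‖T ^ n‖ ≤ C)
    (L : (ℕ →ᵇ ℂ) →L[ℂ] ℂ) (hL : IsBanachLimit L)
    (A : H →L[ℂ] H) (hA : IsLAsymptoticLimit L T A) :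
    IsUnit A ↔ ∃ c : ℝ, 0 < c ∧ ∀ (x : H) (n : ℕ), c * ‖x‖ ≤ ‖(T ^ n) x‖ := by
  obtain ⟨C, hC⟩ := hT
  exact hA.1.isUnit_iff_exists_pos_mul_norm_sq_le.trans (hA.exists_pos_mul_norm_sq_le_iff hL hC)
end

section
/- Let T be power bounded with L-asymptotic limit A_{T,L}, and define X_+ : H → (H_0)^⊥ by X_+ h = P A_{T,L}^{1/2} h, where P is the orthogonal projection onto the orthocomplement of the stable subspace H_0 = ker A_{T,L}. Then there exists a unique isometry V on (H_0)^⊥ with V X_+ = X_+ T. -/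
/-!
Shift invariance of the Banach limit gives `⟪A (T x), T x⟫ = ⟪A x, x⟫`, that is
`‖S (T x)‖ = ‖S x‖` for the square root `S` of `A`. As `S` is self-adjoint, `ker A = ker S` and
`(ker S)ᗮ` is the closure of the range of `S`, so `X₊` has dense range in `(ker A)ᗮ` and
`X₊ x ↦ X₊ (T x)` extends by continuity to an isometry, which density also makes unique.
-/

open ContinuousLinearMap Filter Topology BoundedContinuousFunction

open scoped InnerProductSpace

section Extension

variable {𝕜 E K F : Type*} [NontriviallyNormedField 𝕜]
  [NormedAddCommGroup E] [NormedSpace 𝕜 E] [NormedAddCommGroup K] [NormedSpace 𝕜 K]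
  [NormedAddCommGroup F] [NormedSpace 𝕜 F] [CompleteSpace F]

theorem ContinuousLinearMap.existsUnique_isometry_comp_eq (X : E →L[𝕜] K) (W : E →L[𝕜] F)
    (hX : DenseRange X) (hW : ∀ x, ‖W x‖ = ‖X x‖) :
    ∃! V : K →L[𝕜] F, (∀ u, ‖V u‖ = ‖u‖) ∧ V ∘L X = W := by
  have hbound : ∀ x, ‖W x‖ ≤ 1 * ‖X x‖ := fun x => by rw [one_mul, hW]
  set V := (W : E →ₗ[𝕜] F).extendOfNorm (X : E →ₗ[𝕜] K)
  have hVX : ∀ x, V (X x) = W x := LinearMap.extendOfNorm_eq hX ⟨1, hbound⟩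
  refine ⟨V, ⟨fun u => ?_, ContinuousLinearMap.ext hVX⟩, fun V' ⟨_, hV'⟩ => ?_⟩
  · refine hX.induction_on u (isClosed_eq (by fun_prop) continuous_norm) fun x => ?_
    rw [hVX, hW]
  · exact (LinearMap.extendOfNorm_unique hX 1 hbound V' (by rw [← hV']; rfl)).symm

end Extension

section Hilbert

variable {𝕜 E F : Type*} [RCLike 𝕜] [NormedAddCommGroup E] [InnerProductSpace 𝕜 E]
  [NormedAddCommGroup F] [InnerProductSpace 𝕜 F]

theorem Submodule.denseRange_orthogonalProjectionOnto_comp (S : E →L[𝕜] F) (K : Submodule 𝕜 F)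
    [K.HasOrthogonalProjection] (hK : K ≤ S.range.topologicalClosure) :
    DenseRange (K.orthogonalProjectionOnto ∘L S) := by
  intro u
  rw [ContinuousLinearMap.coe_comp, Set.range_comp,
    ← K.orthogonalProjectionOnto_mem_subspace_eq_self u]
  exact image_closure_subset_closure_image (by fun_prop) (Set.mem_image_of_mem _ (hK u.2))

variable {T : E →L[𝕜] E}

theorem exists_boundedContinuousFunction_eq_inner_pow (hT : ∃ C : ℝ, ∀ n : ℕ, ‖T ^ n‖ ≤ C)
    (x y : E) : ∃ f : ℕ →ᵇ 𝕜, ∀ n, f n = ⟪(T ^ n) x, (T ^ n) y⟫_𝕜 := by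
  obtain ⟨C, hC⟩ := hT
  have hbound (n : ℕ) : ‖⟪(T ^ n) x, (T ^ n) y⟫_𝕜‖ ≤ C * ‖x‖ * (C * ‖y‖) := by
    have hx := (T ^ n).le_of_opNorm_le (hC n) x
    have hy := (T ^ n).le_of_opNorm_le (hC n) y
    exact (norm_inner_le_norm _ _).trans
      (mul_le_mul hx hy (norm_nonneg _) ((norm_nonneg _).trans hx))
  exact ⟨.ofNormedAddCommGroupDiscrete _ _ hbound, fun _ => rfl⟩

end Hilbert

section AsymptoticLimit

variable {H : Type*} [NormedAddCommGroup H] [InnerProductSpace ℂ H] [CompleteSpace H]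
  {L : (ℕ →ᵇ ℂ) →L[ℂ] ℂ} {T A : H →L[ℂ] H}

theorem IsLAsymptoticLimit.inner_apply_eq (hA : IsLAsymptoticLimit L T A) {x y : H}
    {f : ℕ →ᵇ ℂ} (hf : ∀ n, f n = ⟪(T ^ n) x, (T ^ n) y⟫_ℂ) : ⟪A x, y⟫_ℂ = L f :=
  hA.2 x y f fun n => by rw [hf, ContinuousLinearMap.comp_apply, adjoint_inner_left]

theorem IsLAsymptoticLimit.inner_apply_map_map (hA : IsLAsymptoticLimit L T A)
    (hL : IsBanachLimit L) (hT : ∃ C : ℝ, ∀ n : ℕ, ‖T ^ n‖ ≤ C) (x y : H) :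
    ⟪A (T x), T y⟫_ℂ = ⟪A x, y⟫_ℂ := by
  obtain ⟨f, hf⟩ := exists_boundedContinuousFunction_eq_inner_pow hT x y
  rw [hA.inner_apply_eq hf, ← hL.shift_inv]
  refine hA.inner_apply_eq fun n => ?_
  simp only [compContinuous_apply, natShift, ContinuousMap.coe_mk, hf, pow_succ,
    mul_apply_eq_comp]

end AsymptoticLimit

/-- Let `T` be power bounded with `L`-asymptotic limit `A`, let `S = A^{1/2}` be the
positive square root of `A`, and let `X₊ : H → (H₀)ᗮ` be `h ↦ P (S h)` where `P` is the
orthogonal projection onto the orthocomplement of `H₀ = ker A`. Then there is a unique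
isometry `V` on `(H₀)ᗮ` with `V X₊ = X₊ T`. -/
theorem stmt10 {H : Type*} [NormedAddCommGroup H] [InnerProductSpace ℂ H] [CompleteSpace H]
    (T : H →L[ℂ] H) (hT : ∃ C : ℝ, ∀ n : ℕ, ‖T ^ n‖ ≤ C)
    (L : (ℕ →ᵇ ℂ) →L[ℂ] ℂ) (hL : IsBanachLimit L)
    (A : H →L[ℂ] H) (hA : IsLAsymptoticLimit L T A)
    (S : H →L[ℂ] H) (hS : S.IsPositive) (hSA : S ∘L S = A) :
    ∃! V : (LinearMap.ker (A : H →ₗ[ℂ] H))ᗮ →L[ℂ] (LinearMap.ker (A : H →ₗ[ℂ] H))ᗮ,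
      (∀ u : (LinearMap.ker (A : H →ₗ[ℂ] H))ᗮ, ‖V u‖ = ‖u‖) ∧
      V ∘L (Submodule.orthogonalProjectionOnto (LinearMap.ker (A : H →ₗ[ℂ] H))ᗮ ∘L S) =
        (Submodule.orthogonalProjectionOnto (LinearMap.ker (A : H →ₗ[ℂ] H))ᗮ ∘L S) ∘L T := by
  have hSA' : adjoint S ∘L S = A := by rw [hS.isSelfAdjoint.adjoint_eq, hSA]
  have hK : (LinearMap.ker (A : H →ₗ[ℂ] H))ᗮ = S.range.topologicalClosure := by
    rw [← hSA', S.ker_adjoint_comp_self, S.orthogonal_ker, hS.isSelfAdjoint.adjoint_eq]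
  have hST (x : H) : ‖S (T x)‖ = ‖S x‖ := by
    rw [S.apply_norm_eq_sqrt_inner_adjoint_left, S.apply_norm_eq_sqrt_inner_adjoint_left, hSA',
      hA.inner_apply_map_map hL hT]
  have hmem (x : H) : S x ∈ (LinearMap.ker (A : H →ₗ[ℂ] H))ᗮ :=
    hK ▸ S.range.le_topologicalClosure ⟨x, rfl⟩
  refine ContinuousLinearMap.existsUnique_isometry_comp_eq _ _
    (Submodule.denseRange_orthogonalProjectionOnto_comp S _ hK.le) fun x => ?_
  simp only [ContinuousLinearMap.comp_apply, hST,
    Submodule.norm_orthogonalProjectionOnto_apply _ (hmem _)]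
end

section
/- Let T be a power bounded operator on H, and write T in block-triangular form with respect to H = H₀ ⊕ H₀^⊥ (where H₀ is the stable subspace) as T = [[T₀, R],[0, T₁]]. Then T₀ is of class C_{0·} (‖T₀^n x‖ → 0 for all x ∈ H₀) and T₁ is of class C_{1·} (‖T₁^n x‖ ↛ 0 for every nonzero x ∈ H₀^⊥). -/
/-!
Power boundedness makes the stable subspace `H₀` closed: if some iterate `Tᴺ x` is within `ε`
of a stable vector, then `‖Tⁿ x‖` is eventually at most `(C + 1) ε`. Hence `P` is the identity
modulo `H₀`, so `Tⁿ y - (P T)ⁿ y ∈ H₀` for all `n`. If `(P T)ⁿ y → 0`, the iterates of `y` come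
arbitrarily close to `H₀`, so `y ∈ H₀`; for `y ∈ H₀ᗮ` this forces `y = 0`.
-/

open ContinuousLinearMap Filter Topology

theorem pow_apply_sub_comp_pow_apply_mem {R E : Type*} [Semiring R] [TopologicalSpace E]
    [AddCommGroup E] [Module R E] {T P : E →L[R] E} {K : Submodule R E}
    (hT : ∀ x ∈ K, T x ∈ K) (hP : ∀ x, x - P x ∈ K) (y : E) (n : ℕ) :
    (T ^ n) y - ((P ∘L T) ^ n) y ∈ K := by
  induction n with
  | zero => simp
  | succ n ih =>
    have hsplit : (T ^ (n + 1)) y - ((P ∘L T) ^ (n + 1)) y =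
        T ((T ^ n) y - ((P ∘L T) ^ n) y) +
          (T (((P ∘L T) ^ n) y) - P (T (((P ∘L T) ^ n) y))) := by
      rw [pow_succ', pow_succ', mul_apply_eq_comp, mul_apply_eq_comp, comp_apply, map_sub]
      abel
    rw [hsplit]
    exact K.add_mem (hT _ ih) (hP _)

section Stable

variable {𝕜 E : Type*} [NontriviallyNormedField 𝕜] [SeminormedAddCommGroup E] [NormedSpace 𝕜 E]

def stableSubmodule (T : E →L[𝕜] E) : Submodule 𝕜 E where
  carrier := {x | Tendsto (fun n : ℕ => (T ^ n) x) atTop (𝓝 0)}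
  add_mem' {x y} hx hy := by simpa using hx.add hy
  zero_mem' := by simpa using tendsto_const_nhds
  smul_mem' c x hx := by simpa only [Set.mem_ofPred_eq, map_smul, smul_zero] using hx.const_smul c

variable {T : E →L[𝕜] E}

theorem mem_stableSubmodule {x : E} :
    x ∈ stableSubmodule T ↔ Tendsto (fun n : ℕ => (T ^ n) x) atTop (𝓝 0) :=
  Iff.rfl

theorem apply_mem_stableSubmodule {x : E} (hx : x ∈ stableSubmodule T) :
    T x ∈ stableSubmodule T := by
  have := hx.comp (tendsto_add_atTop_nat 1)
  simpa only [mem_stableSubmodule, Function.comp_def, pow_succ, mul_apply_eq_comp] using this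

theorem mem_stableSubmodule_of_forall_exists_norm_pow_apply_sub_lt {C : ℝ}
    (hC : ∀ n : ℕ, ‖T ^ n‖ ≤ C) {x : E}
    (hx : ∀ ε > 0, ∃ N : ℕ, ∃ m ∈ stableSubmodule T, ‖(T ^ N) x - m‖ < ε) :
    x ∈ stableSubmodule T := by
  have hC0 : 0 ≤ C := (norm_nonneg _).trans (hC 0)
  rw [mem_stableSubmodule, NormedAddGroup.tendsto_nhds_zero]
  intro ε hε
  obtain ⟨N, m, hm, hxm⟩ := hx (ε / (2 * (C + 1))) (by positivity)
  obtain ⟨K, hK⟩ :=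
    eventually_atTop.1 (NormedAddGroup.tendsto_nhds_zero.1 hm (ε / 2) (by positivity))
  refine eventually_atTop.2 ⟨K + N, fun n hn => ?_⟩
  obtain ⟨k, rfl⟩ := Nat.exists_eq_add_of_le' (le_of_add_le_right hn)
  calc ‖(T ^ (k + N)) x‖ = ‖(T ^ k) m + (T ^ k) ((T ^ N) x - m)‖ := by
        rw [pow_add, mul_apply_eq_comp, map_sub, add_sub_cancel]
    _ ≤ ‖(T ^ k) m‖ + ‖T ^ k‖ * ‖(T ^ N) x - m‖ := norm_add_le_of_le le_rfl (le_opNorm _ _)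
    _ < ε / 2 + (C + 1) * (ε / (2 * (C + 1))) := by
        gcongr
        · exact hK k (by omega)
        · linarith [hC k]
    _ = ε := by field_simp; ring

theorem isClosed_stableSubmodule {C : ℝ} (hC : ∀ n : ℕ, ‖T ^ n‖ ≤ C) :
    IsClosed (stableSubmodule T : Set E) := by
  refine closure_subset_iff_isClosed.1 fun x hx => ?_
  refine mem_stableSubmodule_of_forall_exists_norm_pow_apply_sub_lt hC fun ε hε => ?_
  obtain ⟨m, hm, hxm⟩ := Metric.mem_closure_iff.1 hx ε hε
  exact ⟨0, m, hm, by simpa [dist_eq_norm] using hxm⟩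

theorem mem_stableSubmodule_of_tendsto_comp_pow {C : ℝ} (hC : ∀ n : ℕ, ‖T ^ n‖ ≤ C)
    {P : E →L[𝕜] E} (hP : ∀ x, x - P x ∈ stableSubmodule T) {y : E}
    (hy : Tendsto (fun n : ℕ => ((P ∘L T) ^ n) y) atTop (𝓝 0)) :
    y ∈ stableSubmodule T := by
  refine mem_stableSubmodule_of_forall_exists_norm_pow_apply_sub_lt hC fun ε hε => ?_
  obtain ⟨N, hN⟩ := (NormedAddGroup.tendsto_nhds_zero.1 hy ε hε).exists
  refine ⟨N, _, pow_apply_sub_comp_pow_apply_mem (fun _ => apply_mem_stableSubmodule) hP y N, ?_⟩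
  rwa [sub_sub_cancel]

end Stable

theorem sub_apply_mem_of_isSelfAdjoint {𝕜 E : Type*} [RCLike 𝕜] [NormedAddCommGroup E]
    [InnerProductSpace 𝕜 E] [CompleteSpace E] {K : Submodule 𝕜 E} (hK : IsClosed (K : Set E))
    {P : E →L[𝕜] E} (hP : IsSelfAdjoint P) (hPK : ∀ y ∈ Kᗮ, P y = y) (x : E) : x - P x ∈ K := by
  rw [← hK.submodule_topologicalClosure_eq, ← Submodule.orthogonal_orthogonal_eq_closure,
    Submodule.mem_orthogonal]
  intro u hu
  have hsymm : inner 𝕜 (P u) x = inner 𝕜 u (P x) := hP.isSymmetric u x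
  rw [inner_sub_right, ← hsymm, hPK u hu, sub_self]

theorem stmt12_general {H : Type*} [NormedAddCommGroup H] [InnerProductSpace ℂ H] [CompleteSpace H]
    (T : H →L[ℂ] H) (hT : ∃ C : ℝ, ∀ n : ℕ, ‖T ^ n‖ ≤ C)
    (M : Submodule ℂ H)
    (hM : (M : Set H) = {x : H | Tendsto (fun n : ℕ => ‖(T ^ n) x‖) atTop (𝓝 0)})
    (P : H →L[ℂ] H) (hPsa : IsSelfAdjoint P)
    (hPid : ∀ y ∈ Mᗮ, P y = y) :
    (∀ x ∈ M, T x ∈ M) ∧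
    (∀ x ∈ M, Tendsto (fun n : ℕ => ‖(T ^ n) x‖) atTop (𝓝 0)) ∧
    (∀ y ∈ Mᗮ, y ≠ 0 →
      ¬ Tendsto (fun n : ℕ => ‖((P ∘L T) ^ n) y‖) atTop (𝓝 0)) := by
  obtain ⟨C, hC⟩ := hT
  obtain rfl : M = stableSubmodule T := SetLike.coe_injective <| hM.trans <| by
    ext x; exact tendsto_zero_iff_norm_tendsto_zero.symm
  have hP := sub_apply_mem_of_isSelfAdjoint (isClosed_stableSubmodule hC) hPsa hPid
  refine ⟨fun x => apply_mem_stableSubmodule, fun x => tendsto_zero_iff_norm_tendsto_zero.1,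
    fun y hy hy0 hPT => hy0 ?_⟩
  have hyM :=
    mem_stableSubmodule_of_tendsto_comp_pow hC hP (tendsto_zero_iff_norm_tendsto_zero.2 hPT)
  exact inner_self_eq_zero.1 (Submodule.inner_right_of_mem_orthogonal hyM hy)

/-- Kérchy's lemma: write a power bounded `T` in block-triangular form with respect to
`H = H₀ ⊕ H₀ᗮ`, where `H₀` (here `M`) is the stable subspace and `P` is the orthogonal
projection onto `H₀ᗮ`.  Then the diagonal entry `T₀ = T|H₀` is of class `C₀·`
(`‖T₀ⁿ x‖ → 0` for all `x ∈ H₀`) and `T₁ = P T|H₀ᗮ` is of class `C₁·`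
(`‖T₁ⁿ y‖ ↛ 0` for every nonzero `y ∈ H₀ᗮ`). -/
theorem stmt12 {H : Type*} [NormedAddCommGroup H] [InnerProductSpace ℂ H] [CompleteSpace H]
    (T : H →L[ℂ] H) (hT : ∃ C : ℝ, ∀ n : ℕ, ‖T ^ n‖ ≤ C)
    (M : Submodule ℂ H)
    (hM : (M : Set H) = {x : H | Tendsto (fun n : ℕ => ‖(T ^ n) x‖) atTop (𝓝 0)})
    (P : H →L[ℂ] H) (hPsa : IsSelfAdjoint P)
    (hPrange : ∀ x : H, P x ∈ Mᗮ) (hPid : ∀ y ∈ Mᗮ, P y = y) :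
    (∀ x ∈ M, T x ∈ M) ∧
    (∀ x ∈ M, Tendsto (fun n : ℕ => ‖(T ^ n) x‖) atTop (𝓝 0)) ∧
    (∀ y ∈ Mᗮ, y ≠ 0 →
      ¬ Tendsto (fun n : ℕ => ‖((P ∘L T) ^ n) y‖) atTop (𝓝 0)) :=
  stmt12_general T hT M hM P hPsa hPid
end

section
/- Let T ∉ C_{0·}(H) be power bounded and L a Banach limit. Then the reduced minimum modulus γ(A_{T,L}) is positive if and only if the compression T₁ = P₁ T|H₀^⊥ is similar to an isometry, if and only if there exists c > 0 with c‖x‖ ≤ ‖T^n x‖ for all x ∈ H₀^⊥ and all n ∈ ℕ. -/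
open ContinuousLinearMap Filter Topology BoundedContinuousFunction

/-!
The form of `A` is the Banach limit of the forms `⟪Tⁿx, Tⁿy⟫`. Shift invariance of `L` makes it
`T`-invariant, `⟪A T x, T y⟫ = ⟪A x, y⟫`, and positivity of `L` turns the bounds
`c‖x‖ ≤ ‖Tᵏx‖ ≤ C‖x‖` into `c²‖x‖² ≤ ⟪A x, x⟫ ≤ C²‖x‖²`. Applied to `Tⁿx`, the upper bound and
`‖A x‖ ≤ ‖A^{1/2}‖ ‖A^{1/2} x‖` give `‖A x‖ ≤ C ‖A^{1/2}‖ ‖Tⁿx‖`; the lower bound gives coercivity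
of the form on `H₀ᗮ`, hence `γ(A) > 0`. The invariance also shows that `H₀ = ker A` is
`T`-invariant (for positive `A`, `ker A = {x | ⟪A x, x⟫ = 0}`), so that `T₁ⁿ = P₁ Tⁿ|H₀ᗮ`.

A coercive form invariant under `T₁` makes `X = (P₁ A|H₀ᗮ)^{1/2}` invertible with
`‖X T₁ X⁻¹ u‖² = ⟪A T₁ v, T₁ v⟫ = ⟪A T v, T v⟫ = ⟪A v, v⟫ = ‖u‖²` for `v = X⁻¹u`, as
`T₁ v - T v ∈ ker A`. Conversely, if `X T₁ X⁻¹` is an isometry then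
`‖Tⁿx‖ ≥ ‖T₁ⁿx‖ ≥ ‖x‖ / (‖X‖ ‖X⁻¹‖)`.
-/

open scoped InnerProductSpace

theorem IsBanachLimit.le_re_apply {L : (ℕ →ᵇ ℂ) →L[ℂ] ℂ} (hL : IsBanachLimit L)
    {f : ℕ →ᵇ ℂ} {r : ℝ} (hf : ∀ n, (f n).im = 0) (hr : ∀ n, r ≤ (f n).re) : r ≤ (L f).re := by
  have hconst : L (const ℕ (r : ℂ)) = r := hL.lim_eq _ _ tendsto_const_nhds
  have hpos := (hL.pos (f - const ℕ (r : ℂ)) fun n => by simp [hf n, hr n]).1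
  rw [map_sub, hconst, Complex.sub_re, Complex.ofReal_re] at hpos
  linarith

theorem IsBanachLimit.re_apply_le {L : (ℕ →ᵇ ℂ) →L[ℂ] ℂ} (hL : IsBanachLimit L)
    {f : ℕ →ᵇ ℂ} {r : ℝ} (hf : ∀ n, (f n).im = 0) (hr : ∀ n, (f n).re ≤ r) : (L f).re ≤ r := by
  have := hL.le_re_apply (f := -f) (r := -r) (fun n => by simp [hf n]) (fun n => by simp [hr n])
  rw [map_neg, Complex.neg_re] at this
  linarith

namespace ContinuousLinearMap

section Similarity

variable {𝕜 E : Type*} [NontriviallyNormedField 𝕜] [NormedAddCommGroup E] [NormedSpace 𝕜 E]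

def IsSimilarToIsometry (S : E →L[𝕜] E) : Prop :=
  ∃ X X' : E →L[𝕜] E, X ∘L X' = 1 ∧ X' ∘L X = 1 ∧ ∀ u, ‖(X ∘L (S ∘L X')) u‖ = ‖u‖

theorem IsSimilarToIsometry.exists_pos_mul_norm_le_norm_pow_apply {S : E →L[𝕜] E}
    (hS : S.IsSimilarToIsometry) :
    ∃ c : ℝ, 0 < c ∧ ∀ (n : ℕ) (u : E), c * ‖u‖ ≤ ‖(S ^ n) u‖ := by
  obtain ⟨X, X', hXX', hX'X, hV⟩ := hS
  set V := X ∘L (S ∘L X')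
  let e : (E →L[𝕜] E)ˣ := ⟨X, X', hXX', hX'X⟩
  have hSn (n : ℕ) : S ^ n = X' * V ^ n * X := by
    have hS : S = ↑e⁻¹ * (↑e * S * ↑e⁻¹) * ↑e := by simp [mul_assoc]
    rw [hS, Units.conj_pow']
    rfl
  have hVn (n : ℕ) (u : E) : ‖(V ^ n) u‖ = ‖u‖ := by
    induction n generalizing u with
    | zero => simp
    | succ n ih => rw [pow_succ, mul_apply_eq_comp, ih, hV]
  have hX' (u : E) : X' (X u) = u := by simpa using DFunLike.congr_fun hX'X u
  have hX (u : E) : X (X' u) = u := by simpa using DFunLike.congr_fun hXX' u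
  refine ⟨(‖X'‖ * ‖X‖ + 1)⁻¹, by positivity, fun n u => ?_⟩
  rw [inv_mul_le_iff₀ (by positivity)]
  calc ‖u‖ = ‖X' (X u)‖ := by rw [hX']
    _ ≤ ‖X'‖ * ‖(V ^ n) (X u)‖ := by rw [hVn]; exact le_opNorm _ _
    _ = ‖X'‖ * ‖X (X' ((V ^ n) (X u)))‖ := by rw [hX]
    _ ≤ ‖X'‖ * (‖X‖ * ‖(S ^ n) u‖) := by
      rw [hSn, mul_apply_eq_comp, mul_apply_eq_comp]; gcongr; exact le_opNorm _ _
    _ ≤ (‖X'‖ * ‖X‖ + 1) * ‖(S ^ n) u‖ := by nlinarith [norm_nonneg ((S ^ n) u)]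

end Similarity

section InnerProductSpace

variable {E : Type*} [NormedAddCommGroup E] [InnerProductSpace ℂ E] {B : E →L[ℂ] E}

theorem mul_norm_le_norm_apply {c : ℝ} {x : E} (h : c * ‖x‖ ^ 2 ≤ (⟪B x, x⟫_ℂ).re) :
    c * ‖x‖ ≤ ‖B x‖ := by
  rcases eq_or_ne x 0 with rfl | hx
  · simp
  refine le_of_mul_le_mul_right ?_ (norm_pos_iff.2 hx)
  calc c * ‖x‖ * ‖x‖ = c * ‖x‖ ^ 2 := by ring
    _ ≤ ‖⟪B x, x⟫_ℂ‖ := h.trans (Complex.re_le_norm _)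
    _ ≤ ‖B x‖ * ‖x‖ := norm_inner_le_norm _ _

theorem exists_pos_mul_norm_le_norm_apply {s : Set E}
    (h : ∃ c : ℝ, 0 < c ∧ ∀ x ∈ s, c * ‖x‖ ^ 2 ≤ (⟪B x, x⟫_ℂ).re) :
    ∃ c : ℝ, 0 < c ∧ ∀ x ∈ s, c * ‖x‖ ≤ ‖B x‖ :=
  let ⟨c, hc, hcoer⟩ := h
  ⟨c, hc, fun x hx => mul_norm_le_norm_apply (hcoer x hx)⟩

variable [CompleteSpace E]

theorem IsPositive.norm_sqrt_apply_sq (hB : B.IsPositive) (x : E) :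
    ‖CFC.sqrt B x‖ ^ 2 = (⟪B x, x⟫_ℂ).re := by
  rw [apply_norm_sq_eq_inner_adjoint_left, ← star_eq_adjoint, (CFC.sqrt_nonneg B).star_eq,
    ← mul_def, CFC.sqrt_mul_sqrt_self B ((nonneg_iff_isPositive B).2 hB), RCLike.re_to_complex]

theorem IsPositive.norm_apply_le (hB : B.IsPositive) (x : E) :
    ‖B x‖ ≤ ‖CFC.sqrt B‖ * ‖CFC.sqrt B x‖ := by
  conv_lhs => rw [← CFC.sqrt_mul_sqrt_self B ((nonneg_iff_isPositive B).2 hB), mul_apply_eq_comp]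
  exact le_opNorm _ _

theorem IsPositive.isSimilarToIsometry {S : E →L[ℂ] E} (hB : B.IsPositive)
    {c : ℝ} (hc : 0 < c) (hcoer : ∀ u, c * ‖u‖ ^ 2 ≤ (⟪B u, u⟫_ℂ).re)
    (hS : ∀ u, (⟪B (S u), S u⟫_ℂ).re = (⟪B u, u⟫_ℂ).re) : S.IsSimilarToIsometry := by
  have hBunit : IsUnit B := isUnit_of_forall_le_norm_inner_map B (c := ⟨c, hc.le⟩) hc fun u =>
    (mul_comm (‖u‖ ^ 2) c).le.trans ((hcoer u).trans (Complex.re_le_norm _))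
  obtain ⟨X, hX⟩ := IsStrictlyPositive.isUnit_cfcSqrt B
    (IsStrictlyPositive.iff_of_unital.2 ⟨(nonneg_iff_isPositive B).2 hB, hBunit⟩)
  refine ⟨X, ↑X⁻¹, X.mul_inv, X.inv_mul, fun u => ?_⟩
  have hXu : (X : E →L[ℂ] E) (((X⁻¹ : (E →L[ℂ] E)ˣ) : E →L[ℂ] E) u) = u := by
    rw [← mul_apply_eq_comp, X.mul_inv, one_apply_eq_self]
  rw [comp_apply, comp_apply, hX, ← pow_left_inj₀ (norm_nonneg _) (norm_nonneg _) two_ne_zero,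
    hB.norm_sqrt_apply_sq, hS, ← hB.norm_sqrt_apply_sq, ← hX, hXu]

end InnerProductSpace

end ContinuousLinearMap

theorem LinearMap.IsSymmetric.inner_apply_self_eq_of_sub_mem_ker {𝕜 E : Type*} [RCLike 𝕜]
    [NormedAddCommGroup E] [InnerProductSpace 𝕜 E] {B : E →ₗ[𝕜] E} (hB : B.IsSymmetric)
    {x y : E} (h : x - y ∈ LinearMap.ker B) : ⟪B x, x⟫_𝕜 = ⟪B y, y⟫_𝕜 := by
  have hxy : B x = B y := by rw [← sub_eq_zero, ← map_sub]; exact h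
  calc ⟪B x, x⟫_𝕜 = ⟪B y, x⟫_𝕜 := by rw [hxy]
    _ = ⟪y, B x⟫_𝕜 := hB y x
    _ = ⟪B y, y⟫_𝕜 := by rw [hxy, hB y y]

namespace Submodule

variable {𝕜 E : Type*} [RCLike 𝕜] [NormedAddCommGroup E] [InnerProductSpace 𝕜 E]
  (M : Submodule 𝕜 E) [M.HasOrthogonalProjection]

noncomputable def compression (T : E →L[𝕜] E) : M →L[𝕜] M :=
  M.orthogonalProjectionOnto ∘L (T ∘L M.subtypeL)

variable {M} {T : E →L[𝕜] E}

theorem inner_compression_apply (B : E →L[𝕜] E) (u v : M) :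
    ⟪M.compression B u, v⟫_𝕜 = ⟪B u, v⟫_𝕜 :=
  M.inner_orthogonalProjectionOnto_eq_of_mem_right _ _

theorem _root_.ContinuousLinearMap.IsPositive.compression {B : E →L[𝕜] E} (hB : B.IsPositive) :
    (M.compression B).IsPositive :=
  hB.orthogonalProjectionOnto_comp M

theorem orthogonalProjectionOnto_apply_eq_compression (hT : ∀ x ∈ Mᗮ, T x ∈ Mᗮ) (x : E) :
    M.orthogonalProjectionOnto (T x) = M.compression T (M.orthogonalProjectionOnto x) := by
  have hx : T x = T (M.starProjection x) + T (x - M.starProjection x) := by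
    rw [← map_add, add_sub_cancel]
  rw [hx, map_add, orthogonalProjectionOnto_apply_of_mem_orthogonal
    (hT _ (sub_starProjection_mem_orthogonal x)), add_zero]
  rfl

theorem compression_pow_apply (hT : ∀ x ∈ Mᗮ, T x ∈ Mᗮ) (n : ℕ) (u : M) :
    (M.compression T ^ n) u = M.orthogonalProjectionOnto ((T ^ n) u) := by
  induction n with
  | zero => simp
  | succ n ih =>
    rw [pow_succ', mul_apply_eq_comp, ih, pow_succ', mul_apply_eq_comp,
      orthogonalProjectionOnto_apply_eq_compression hT]

theorem exists_pos_mul_norm_le_norm_pow_apply (hT : ∀ x ∈ Mᗮ, T x ∈ Mᗮ)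
    (hsim : (M.compression T).IsSimilarToIsometry) :
    ∃ c : ℝ, 0 < c ∧ ∀ x ∈ M, ∀ n : ℕ, c * ‖x‖ ≤ ‖(T ^ n) x‖ := by
  obtain ⟨c, hc, hbound⟩ := hsim.exists_pos_mul_norm_le_norm_pow_apply
  refine ⟨c, hc, fun x hx n => ?_⟩
  calc c * ‖x‖ ≤ ‖(M.compression T ^ n) ⟨x, hx⟩‖ := hbound n ⟨x, hx⟩
    _ ≤ ‖(T ^ n) x‖ := by
      rw [M.compression_pow_apply hT]; exact M.norm_orthogonalProjectionOnto_apply_le _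

end Submodule

theorem exists_boundedContinuousFunction_inner_pow_apply {H : Type*} [NormedAddCommGroup H]
    [InnerProductSpace ℂ H] {T : H →L[ℂ] H} {C : ℝ} (hC : ∀ n, ‖T ^ n‖ ≤ C) (x y : H) :
    ∃ f : ℕ →ᵇ ℂ, ∀ n, f n = ⟪(T ^ n) x, (T ^ n) y⟫_ℂ := by
  have hC₀ : 0 ≤ C := (norm_nonneg _).trans (hC 0)
  refine ⟨ofNormedAddCommGroupDiscrete _ (C * ‖x‖ * (C * ‖y‖)) fun n => ?_, fun _ => rfl⟩
  exact (norm_inner_le_norm _ _).trans <| mul_le_mul ((T ^ n).le_of_opNorm_le (hC n) x)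
    ((T ^ n).le_of_opNorm_le (hC n) y) (norm_nonneg _) (by positivity)

namespace IsLAsymptoticLimit

variable {H : Type*} [NormedAddCommGroup H] [InnerProductSpace ℂ H] [CompleteSpace H]
  {T A : H →L[ℂ] H} {C : ℝ} {L : (ℕ →ᵇ ℂ) →L[ℂ] ℂ}

theorem inner_eq (hA : IsLAsymptoticLimit L T A) {x y : H} {f : ℕ →ᵇ ℂ}
    (hf : ∀ n, f n = ⟪(T ^ n) x, (T ^ n) y⟫_ℂ) : ⟪A x, y⟫_ℂ = L f :=
  hA.2 x y f fun n => by rw [hf, ContinuousLinearMap.comp_apply, adjoint_inner_left]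

theorem inner_apply_apply (hA : IsLAsymptoticLimit L T A) (hC : ∀ n, ‖T ^ n‖ ≤ C)
    (hL : IsBanachLimit L) (x y : H) : ⟪A (T x), T y⟫_ℂ = ⟪A x, y⟫_ℂ := by
  obtain ⟨f, hf⟩ := exists_boundedContinuousFunction_inner_pow_apply hC x y
  rw [hA.inner_eq hf, ← hL.shift_inv]
  exact hA.inner_eq fun n => by
    rw [compContinuous_apply, hf]
    simp only [natShift, ContinuousMap.coe_mk, pow_succ, mul_apply_eq_comp]

theorem inner_pow_apply_pow_apply (hA : IsLAsymptoticLimit L T A) (hC : ∀ n, ‖T ^ n‖ ≤ C)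
    (hL : IsBanachLimit L) (n : ℕ) (x y : H) :
    ⟪A ((T ^ n) x), (T ^ n) y⟫_ℂ = ⟪A x, y⟫_ℂ := by
  induction n generalizing x y with
  | zero => simp
  | succ n ih =>
    rw [pow_succ, mul_apply_eq_comp, mul_apply_eq_comp, ih, hA.inner_apply_apply hC hL]

theorem le_re_inner (hA : IsLAsymptoticLimit L T A) (hC : ∀ n, ‖T ^ n‖ ≤ C)
    (hL : IsBanachLimit L) {x : H} {r : ℝ} (hr : ∀ n, r ≤ ‖(T ^ n) x‖ ^ 2) :
    r ≤ (⟪A x, x⟫_ℂ).re := by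
  obtain ⟨f, hf⟩ := exists_boundedContinuousFunction_inner_pow_apply hC x x
  rw [hA.inner_eq hf]
  exact hL.le_re_apply (fun n => by simp [hf, ← Complex.ofReal_pow])
    (fun n => by simpa [hf, ← Complex.ofReal_pow] using hr n)

theorem re_inner_le (hA : IsLAsymptoticLimit L T A) (hC : ∀ n, ‖T ^ n‖ ≤ C)
    (hL : IsBanachLimit L) {x : H} {r : ℝ} (hr : ∀ n, ‖(T ^ n) x‖ ^ 2 ≤ r) :
    (⟪A x, x⟫_ℂ).re ≤ r := by
  obtain ⟨f, hf⟩ := exists_boundedContinuousFunction_inner_pow_apply hC x x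
  rw [hA.inner_eq hf]
  exact hL.re_apply_le (fun n => by simp [hf, ← Complex.ofReal_pow])
    (fun n => by simpa [hf, ← Complex.ofReal_pow] using hr n)

theorem norm_sqrt_apply_le (hA : IsLAsymptoticLimit L T A) (hC : ∀ n, ‖T ^ n‖ ≤ C)
    (hL : IsBanachLimit L) (n : ℕ) (x : H) : ‖CFC.sqrt A x‖ ≤ C * ‖(T ^ n) x‖ := by
  have hC₀ : 0 ≤ C := (norm_nonneg _).trans (hC 0)
  refine (pow_le_pow_iff_left₀ (norm_nonneg _) (by positivity) two_ne_zero).1 ?_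
  rw [hA.1.norm_sqrt_apply_sq, ← hA.inner_pow_apply_pow_apply hC hL n x x]
  refine hA.re_inner_le hC hL fun k => ?_
  exact pow_le_pow_left₀ (norm_nonneg _) ((T ^ k).le_of_opNorm_le (hC k) _) 2

theorem apply_mem_ker (hA : IsLAsymptoticLimit L T A) (hC : ∀ n, ‖T ^ n‖ ≤ C)
    (hL : IsBanachLimit L) {x : H} (hx : x ∈ LinearMap.ker (A : H →ₗ[ℂ] H)) :
    T x ∈ LinearMap.ker (A : H →ₗ[ℂ] H) := by
  have hsqrt : CFC.sqrt A (T x) = 0 := by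
    rw [← norm_eq_zero, ← sq_eq_zero_iff, hA.1.norm_sqrt_apply_sq,
      hA.inner_apply_apply hC hL, show A x = 0 from hx, inner_zero_left, Complex.zero_re]
  rw [LinearMap.mem_ker, ContinuousLinearMap.coe_coe,
    ← CFC.sqrt_mul_sqrt_self A ((nonneg_iff_isPositive A).2 hA.1), mul_apply_eq_comp, hsqrt,
    map_zero]

theorem exists_pos_mul_norm_le_norm_pow_apply (hA : IsLAsymptoticLimit L T A)
    (hC : ∀ n, ‖T ^ n‖ ≤ C) (hL : IsBanachLimit L) {s : Set H}
    (h : ∃ c : ℝ, 0 < c ∧ ∀ x ∈ s, c * ‖x‖ ≤ ‖A x‖) :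
    ∃ c : ℝ, 0 < c ∧ ∀ x ∈ s, ∀ n : ℕ, c * ‖x‖ ≤ ‖(T ^ n) x‖ := by
  obtain ⟨c, hc, hbound⟩ := h
  have hC₀ : 0 ≤ C := (norm_nonneg _).trans (hC 0)
  refine ⟨c / (‖CFC.sqrt A‖ * C + 1), by positivity, fun x hx n => ?_⟩
  rw [div_mul_eq_mul_div, div_le_iff₀ (by positivity)]
  calc c * ‖x‖ ≤ ‖A x‖ := hbound x hx
    _ ≤ ‖CFC.sqrt A‖ * ‖CFC.sqrt A x‖ := hA.1.norm_apply_le x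
    _ ≤ ‖CFC.sqrt A‖ * (C * ‖(T ^ n) x‖) := by gcongr; exact hA.norm_sqrt_apply_le hC hL n x
    _ ≤ ‖(T ^ n) x‖ * (‖CFC.sqrt A‖ * C + 1) := by nlinarith [norm_nonneg ((T ^ n) x)]

theorem exists_pos_mul_norm_sq_le_re_inner (hA : IsLAsymptoticLimit L T A)
    (hC : ∀ n, ‖T ^ n‖ ≤ C) (hL : IsBanachLimit L) {s : Set H}
    (h : ∃ c : ℝ, 0 < c ∧ ∀ x ∈ s, ∀ n : ℕ, c * ‖x‖ ≤ ‖(T ^ n) x‖) :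
    ∃ c : ℝ, 0 < c ∧ ∀ x ∈ s, c * ‖x‖ ^ 2 ≤ (⟪A x, x⟫_ℂ).re := by
  obtain ⟨c, hc, hbound⟩ := h
  refine ⟨c ^ 2, by positivity, fun x hx => hA.le_re_inner hC hL fun n => ?_⟩
  rw [← mul_pow]
  exact pow_le_pow_left₀ (by positivity) (hbound x hx n) 2

theorem isSimilarToIsometry_compression (hA : IsLAsymptoticLimit L T A)
    (hC : ∀ n, ‖T ^ n‖ ≤ C) (hL : IsBanachLimit L)
    (h : ∃ c : ℝ, 0 < c ∧
      ∀ x ∈ (LinearMap.ker (A : H →ₗ[ℂ] H))ᗮ, c * ‖x‖ ^ 2 ≤ (⟪A x, x⟫_ℂ).re) :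
    ((LinearMap.ker (A : H →ₗ[ℂ] H))ᗮ.compression T).IsSimilarToIsometry := by
  obtain ⟨c, hc, hcoer⟩ := h
  set M := (LinearMap.ker (A : H →ₗ[ℂ] H))ᗮ
  have hproj (x : H) : ⟪A (M.starProjection x), M.starProjection x⟫_ℂ = ⟪A x, x⟫_ℂ := by
    refine (hA.1.isSymmetric.inner_apply_self_eq_of_sub_mem_ker ?_).symm
    simpa only [M, Submodule.orthogonal_orthogonal] using M.sub_starProjection_mem_orthogonal x
  refine (hA.1.compression (M := M)).isSimilarToIsometry hc
    (fun u => by rw [M.inner_compression_apply]; exact hcoer u u.2) (fun u => ?_)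
  rw [M.inner_compression_apply, M.inner_compression_apply,
    ← hA.inner_apply_apply hC hL u u]
  exact congrArg Complex.re (hproj (T u))

end IsLAsymptoticLimit

theorem stmt13_general {H : Type*} [NormedAddCommGroup H] [InnerProductSpace ℂ H] [CompleteSpace H]
    (T : H →L[ℂ] H) (hT : ∃ C : ℝ, ∀ n : ℕ, ‖T ^ n‖ ≤ C)
    (L : (ℕ →ᵇ ℂ) →L[ℂ] ℂ) (hL : IsBanachLimit L)
    (A : H →L[ℂ] H) (hA : IsLAsymptoticLimit L T A) :
    ((∃ c : ℝ, 0 < c ∧ ∀ x ∈ (LinearMap.ker (A : H →ₗ[ℂ] H))ᗮ, c * ‖x‖ ≤ ‖A x‖) ↔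
      (∃ X X' : (LinearMap.ker (A : H →ₗ[ℂ] H))ᗮ →L[ℂ] (LinearMap.ker (A : H →ₗ[ℂ] H))ᗮ,
        X ∘L X' = 1 ∧ X' ∘L X = 1 ∧
        ∀ u : (LinearMap.ker (A : H →ₗ[ℂ] H))ᗮ,
          ‖(X ∘L (((LinearMap.ker (A : H →ₗ[ℂ] H))ᗮ.orthogonalProjectionOnto ∘L
              (T ∘L (LinearMap.ker (A : H →ₗ[ℂ] H))ᗮ.subtypeL)) ∘L X')) u‖ = ‖u‖)) ∧
    ((∃ c : ℝ, 0 < c ∧ ∀ x ∈ (LinearMap.ker (A : H →ₗ[ℂ] H))ᗮ, c * ‖x‖ ≤ ‖A x‖) ↔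
      (∃ c : ℝ, 0 < c ∧ ∀ x ∈ (LinearMap.ker (A : H →ₗ[ℂ] H))ᗮ, ∀ n : ℕ, c * ‖x‖ ≤ ‖(T ^ n) x‖)) := by
  obtain ⟨C, hC⟩ := hT
  set M := (LinearMap.ker (A : H →ₗ[ℂ] H))ᗮ
  have hker_invariant : ∀ x ∈ Mᗮ, T x ∈ Mᗮ := by
    simpa only [M, Submodule.orthogonal_orthogonal] using fun x => hA.apply_mem_ker hC hL
  have orbit_bound_of_gamma_pos := hA.exists_pos_mul_norm_le_norm_pow_apply hC hL (s := M)
  have coercive_of_orbit_bound := hA.exists_pos_mul_norm_sq_le_re_inner hC hL (s := M)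
  refine ⟨⟨fun hi => ?_, fun hii => ?_⟩, ⟨orbit_bound_of_gamma_pos, fun hiii => ?_⟩⟩
  · exact hA.isSimilarToIsometry_compression hC hL (coercive_of_orbit_bound (orbit_bound_of_gamma_pos hi))
  · exact exists_pos_mul_norm_le_norm_apply
      (coercive_of_orbit_bound (Submodule.exists_pos_mul_norm_le_norm_pow_apply hker_invariant hii))
  · exact exists_pos_mul_norm_le_norm_apply (coercive_of_orbit_bound hiii)

/-- Let `T ∉ C₀·(H)` be power bounded, `L` a Banach limit and `A = A_{T,L}` its
`L`-asymptotic limit (whose kernel is the stable subspace `H₀`).  Then the following are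
equivalent: (i) the reduced minimum modulus `γ(A)` is positive, (ii) the compression
`T₁ = P₁ T|H₀ᗮ` is similar to an isometry, (iii) there is `c > 0` with
`c ‖x‖ ≤ ‖T^n x‖` for all `x ∈ H₀ᗮ` and all `n`. -/
theorem stmt13 {H : Type*} [NormedAddCommGroup H] [InnerProductSpace ℂ H] [CompleteSpace H]
    (T : H →L[ℂ] H) (hT : ∃ C : ℝ, ∀ n : ℕ, ‖T ^ n‖ ≤ C)
    (L : (ℕ →ᵇ ℂ) →L[ℂ] ℂ) (hL : IsBanachLimit L)
    (A : H →L[ℂ] H) (hA : IsLAsymptoticLimit L T A)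
    (hker : (LinearMap.ker (A : H →ₗ[ℂ] H) : Set H) =
      {x : H | Tendsto (fun n : ℕ => ‖(T ^ n) x‖) atTop (𝓝 0)})
    (hC0 : LinearMap.ker (A : H →ₗ[ℂ] H) ≠ ⊤) :
    ((∃ c : ℝ, 0 < c ∧ ∀ x ∈ (LinearMap.ker (A : H →ₗ[ℂ] H))ᗮ, c * ‖x‖ ≤ ‖A x‖) ↔
      (∃ X X' : (LinearMap.ker (A : H →ₗ[ℂ] H))ᗮ →L[ℂ] (LinearMap.ker (A : H →ₗ[ℂ] H))ᗮ,
        X ∘L X' = 1 ∧ X' ∘L X = 1 ∧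
        ∀ u : (LinearMap.ker (A : H →ₗ[ℂ] H))ᗮ,
          ‖(X ∘L (((LinearMap.ker (A : H →ₗ[ℂ] H))ᗮ.orthogonalProjectionOnto ∘L
              (T ∘L (LinearMap.ker (A : H →ₗ[ℂ] H))ᗮ.subtypeL)) ∘L X')) u‖ = ‖u‖)) ∧
    ((∃ c : ℝ, 0 < c ∧ ∀ x ∈ (LinearMap.ker (A : H →ₗ[ℂ] H))ᗮ, c * ‖x‖ ≤ ‖A x‖) ↔
      (∃ c : ℝ, 0 < c ∧ ∀ x ∈ (LinearMap.ker (A : H →ₗ[ℂ] H))ᗮ, ∀ n : ℕ, c * ‖x‖ ≤ ‖(T ^ n) x‖)) :=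
  stmt13_general T hT L hL A hA
end

section
/- If N is a power bounded normal operator on a Hilbert space, then N is a contraction, N decomposes as the orthogonal sum of a unitary operator and a C_{00} normal contraction, and its asymptotic limit A_N is the orthogonal projection onto H₀(N)^⊥; in particular A_N = A_{N*}. -/
/-!
For a normal `N` one has `‖N ^ 2 ^ k‖ = ‖N‖ ^ 2 ^ k`, so power boundedness forces `‖N‖ ≤ 1`.
The defect `D = 1 - N* N` is then a positive operator commuting with `N`, and the inequality
`‖D v‖ ^ 2 ≤ ‖D‖ re ⟪D v, v⟫` gives `‖N ^ n (D x)‖ ^ 2 ≤ ‖D‖ (‖N ^ n x‖ ^ 2 - ‖N ^ (n + 1) x‖ ^ 2)`,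
which tends to `0` because `‖N ^ n x‖` decreases. So `D` maps into `H₀(N)`, and `N` is isometric
on `H₀(N)ᗮ`; there `N* ^ n N ^ n` is the identity, while on `H₀(N)` it tends to `0`. Since
`‖N* ^ n x‖ = ‖N ^ n x‖`, the same holds for `N*` with the same subspace `H₀(N*) = H₀(N)`.
-/

open ContinuousLinearMap Filter Topology

instance IsStarNormal.pow {R : Type*} [Monoid R] [StarMul R] (x : R) [IsStarNormal x] (n : ℕ) :
    IsStarNormal (x ^ n) :=
  ⟨star_pow x n ▸ (star_comm_self (x := x)).pow_pow n n⟩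

section CStarRing

variable {A : Type*} [NormedRing A] [StarRing A] [CStarRing A]

theorem IsStarNormal.norm_pow_two_pow (a : A) [IsStarNormal a] (k : ℕ) :
    ‖a ^ 2 ^ k‖ = ‖a‖ ^ 2 ^ k := by
  have h : ‖a ^ 2 ^ k‖ ^ 2 = (‖a‖ ^ 2 ^ k) ^ 2 :=
    calc ‖a ^ 2 ^ k‖ ^ 2 = ‖star (a ^ 2 ^ k) * a ^ 2 ^ k‖ := by
          rw [CStarRing.norm_star_mul_self, sq]
      _ = ‖(star a * a) ^ 2 ^ k‖ := by rw [star_pow, (star_comm_self (x := a)).mul_pow]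
      _ = ‖star a * a‖ ^ 2 ^ k := (IsSelfAdjoint.star_mul_self a).norm_pow_two_pow k
      _ = (‖a‖ ^ 2 ^ k) ^ 2 := by
          rw [CStarRing.norm_star_mul_self, ← sq, ← pow_mul, ← pow_mul, mul_comm]
  exact (sq_eq_sq₀ (norm_nonneg _) (by positivity)).mp h

theorem IsStarNormal.norm_le_one_of_norm_pow_le {a : A} [IsStarNormal a] {C : ℝ}
    (hC : ∀ n : ℕ, ‖a ^ n‖ ≤ C) : ‖a‖ ≤ 1 := by
  by_contra! h
  obtain ⟨k, hk⟩ := pow_unbounded_of_one_lt C h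
  have h2k : ‖a‖ ^ k ≤ ‖a‖ ^ 2 ^ k := pow_le_pow_right₀ h.le k.lt_two_pow_self.le
  linarith [hC (2 ^ k), IsStarNormal.norm_pow_two_pow a k]

end CStarRing

namespace ContinuousLinearMap

section NormedSpace

variable {𝕜 E : Type*} [NontriviallyNormedField 𝕜] [NormedAddCommGroup E] [NormedSpace 𝕜 E]

theorem norm_pow_le_one {T : E →L[𝕜] E} (hT : ‖T‖ ≤ 1) (n : ℕ) : ‖T ^ n‖ ≤ 1 := by
  rcases n.eq_zero_or_pos with rfl | hn
  · exact norm_id_le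
  · exact (norm_pow_le' T hn).trans (pow_le_one₀ (norm_nonneg T) hT)

def stableSubspace (T : E →L[𝕜] E) : Submodule 𝕜 E where
  carrier := {x | Tendsto (fun n : ℕ => (T ^ n) x) atTop (𝓝 0)}
  add_mem' hx hy := by simpa only [Set.mem_ofPred_eq, map_add, add_zero] using hx.add hy
  zero_mem' := by simpa only [Set.mem_ofPred_eq, map_zero] using tendsto_const_nhds
  smul_mem' c _ hx := by
    simpa only [Set.mem_ofPred_eq, map_smul, smul_zero] using hx.const_smul c

theorem mem_stableSubspace {T : E →L[𝕜] E} {x : E} :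
    x ∈ T.stableSubspace ↔ Tendsto (fun n : ℕ => (T ^ n) x) atTop (𝓝 0) :=
  Iff.rfl

theorem isClosed_stableSubspace {T : E →L[𝕜] E} {C : ℝ} (hC : ∀ n : ℕ, ‖T ^ n‖ ≤ C) :
    IsClosed (T.stableSubspace : Set E) := by
  have hequi : Equicontinuous fun n : ℕ => ⇑(T ^ n) :=
    ((NormedSpace.equicontinuous_TFAE fun n : ℕ => T ^ n).out 5 1).mp (by exact ⟨C, hC⟩)
  exact hequi.isClosed_setOfPred_tendsto continuous_const

theorem apply_mem_stableSubspace {S T : E →L[𝕜] E} (h : Commute S T) {x : E}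
    (hx : x ∈ T.stableSubspace) : S x ∈ T.stableSubspace := by
  have hSx := (S.continuous.tendsto 0).comp hx
  rw [map_zero] at hSx
  exact hSx.congr fun n => DFunLike.congr_fun (h.pow_right n).eq x

end NormedSpace

section InnerProductSpace

variable {𝕜 E F : Type*} [RCLike 𝕜] [NormedAddCommGroup E] [InnerProductSpace 𝕜 E]
  [NormedAddCommGroup F] [InnerProductSpace 𝕜 F] [CompleteSpace E] [CompleteSpace F]

theorem adjoint_apply_apply_eq_self {T : E →L[𝕜] F} (hT : ‖T‖ ≤ 1) {y : E} (hy : ‖T y‖ = ‖y‖) :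
    adjoint T (T y) = y := by
  have hre : RCLike.re (inner 𝕜 (adjoint T (T y)) y) = ‖y‖ ^ 2 := by
    rw [adjoint_inner_left, inner_self_eq_norm_sq, hy]
  have hle : ‖adjoint T (T y)‖ ≤ ‖y‖ :=
    (adjoint T).le_of_opNorm_le (by simpa using hT) _ |>.trans_eq (by rw [one_mul, hy])
  have hsq : ‖adjoint T (T y) - y‖ ^ 2 ≤ 0 := by
    rw [@norm_sub_sq 𝕜, hre]
    nlinarith [norm_nonneg (adjoint T (T y))]
  rw [← sub_eq_zero, ← norm_eq_zero]
  exact pow_eq_zero_iff two_ne_zero |>.mp (le_antisymm hsq (sq_nonneg _))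

end InnerProductSpace

section Normal

variable {H : Type*} [NormedAddCommGroup H] [InnerProductSpace ℂ H] [CompleteSpace H]

theorem norm_apply_sq_le_of_nonneg {D : H →L[ℂ] H} (hD : 0 ≤ D) (x : H) :
    ‖D x‖ ^ 2 ≤ ‖D‖ * RCLike.re (inner ℂ (D x) x) := by
  obtain ⟨S, rfl⟩ := CStarAlgebra.nonneg_iff_eq_star_mul_self.mp hD
  have hnorm : ‖star S * S‖ = ‖S‖ ^ 2 := by rw [CStarRing.norm_star_mul_self, sq]
  have hre : RCLike.re (inner ℂ ((star S * S) x) x) = ‖S x‖ ^ 2 := by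
    rw [mul_apply_eq_comp, star_eq_adjoint, adjoint_inner_left, inner_self_eq_norm_sq]
  have hle : ‖(star S * S) x‖ ≤ ‖S‖ * ‖S x‖ := by
    rw [mul_apply_eq_comp, ← norm_star S]
    exact (star S).le_opNorm _
  rw [hnorm, hre, ← mul_pow]
  gcongr

theorem re_inner_one_sub_adjoint_mul_self_apply (T : H →L[ℂ] H) (x : H) :
    RCLike.re (inner ℂ ((1 - adjoint T * T) x) x) = ‖x‖ ^ 2 - ‖T x‖ ^ 2 := by
  rw [sub_apply, one_apply_eq_self, mul_apply_eq_comp, inner_sub_left, map_sub,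
    adjoint_inner_left, inner_self_eq_norm_sq, inner_self_eq_norm_sq]

theorem one_sub_adjoint_mul_self_nonneg {T : H →L[ℂ] H} (hT : ‖T‖ ≤ 1) :
    0 ≤ 1 - adjoint T * T := by
  rw [nonneg_iff_isPositive, isPositive_def']
  refine ⟨(IsSelfAdjoint.one _).sub (IsSelfAdjoint.star_mul_self T), fun x => ?_⟩
  rw [reApplyInnerSelf_apply, re_inner_one_sub_adjoint_mul_self_apply, sub_nonneg]
  gcongr
  exact T.le_of_opNorm_le hT x |>.trans_eq (one_mul _)

variable {T : H →L[ℂ] H} [IsStarNormal T]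

theorem stableSubspace_adjoint : (adjoint T).stableSubspace = T.stableSubspace := by
  ext x
  rw [mem_stableSubspace, mem_stableSubspace, tendsto_zero_iff_norm_tendsto_zero,
    tendsto_zero_iff_norm_tendsto_zero (f := fun n : ℕ => (T ^ n) x)]
  refine tendsto_congr fun n => ?_
  rw [← star_eq_adjoint, ← star_pow, star_eq_adjoint]
  exact (isStarNormal_iff_norm_eq_adjoint.mp inferInstance x).symm

theorem apply_mem_orthogonal_stableSubspace {y : H} (hy : y ∈ T.stableSubspaceᗮ) :
    T y ∈ T.stableSubspaceᗮ := by
  have hinv : T.stableSubspace ∈ Module.End.invtSubmodule (adjoint T).toLinearMap :=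
    (Module.End.mem_invtSubmodule_iff_forall_mem_of_mem _).mpr fun _ =>
      apply_mem_stableSubspace star_comm_self
  exact (Module.End.mem_invtSubmodule_iff_forall_mem_of_mem _).mp
    (orthogonal_mem_invtSubmodule hinv) y hy

theorem one_sub_adjoint_mul_self_apply_mem_stableSubspace (hT : ‖T‖ ≤ 1) (x : H) :
    (1 - adjoint T * T) x ∈ T.stableSubspace := by
  set D : H →L[ℂ] H := 1 - adjoint T * T
  set a : ℕ → ℝ := fun n => ‖(T ^ n) x‖
  have hD : Commute D T := (Commute.one_left T).sub_left (star_comm_self.mul_left (.refl T))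
  have ha : Antitone a := antitone_nat_of_succ_le fun n => by
    simp only [a, pow_succ', mul_apply_eq_comp]
    exact T.le_of_opNorm_le hT _ |>.trans_eq (one_mul _)
  obtain ⟨L, haL⟩ : ∃ L, Tendsto a atTop (𝓝 L) :=
    ⟨_, tendsto_atTop_ciInf ha ⟨0, by rintro _ ⟨n, rfl⟩; exact norm_nonneg _⟩⟩
  have hdiff : Tendsto (fun n => ‖D‖ * (a n ^ 2 - a (n + 1) ^ 2)) atTop (𝓝 0) := by
    simpa using ((haL.pow 2).sub ((haL.comp (tendsto_add_atTop_nat 1)).pow 2)).const_mul ‖D‖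
  have hbound : ∀ n, ‖(T ^ n) (D x)‖ ^ 2 ≤ ‖D‖ * (a n ^ 2 - a (n + 1) ^ 2) := fun n => by
    have hDn : (T ^ n) (D x) = D ((T ^ n) x) := DFunLike.congr_fun (hD.pow_right n).eq.symm x
    have hsucc : (T ^ (n + 1)) x = T ((T ^ n) x) := by rw [pow_succ', mul_apply_eq_comp]
    dsimp only [a]
    rw [hDn, hsucc, ← re_inner_one_sub_adjoint_mul_self_apply]
    exact norm_apply_sq_le_of_nonneg (one_sub_adjoint_mul_self_nonneg hT) _
  have hsq := squeeze_zero (fun n => sq_nonneg _) hbound hdiff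
  rw [mem_stableSubspace, tendsto_zero_iff_norm_tendsto_zero]
  simpa [Real.sqrt_sq (norm_nonneg _)] using hsq.sqrt

theorem norm_apply_of_mem_orthogonal_stableSubspace (hT : ‖T‖ ≤ 1) {y : H}
    (hy : y ∈ T.stableSubspaceᗮ) : ‖T y‖ = ‖y‖ := by
  have h := congrArg RCLike.re <| Submodule.inner_right_of_mem_orthogonal
    (one_sub_adjoint_mul_self_apply_mem_stableSubspace hT y) hy
  rw [re_inner_one_sub_adjoint_mul_self_apply, map_zero, sub_eq_zero] at h
  exact (sq_eq_sq₀ (norm_nonneg _) (norm_nonneg _)).mp h.symm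

theorem norm_pow_apply_of_mem_orthogonal_stableSubspace (hT : ‖T‖ ≤ 1) (n : ℕ) {y : H}
    (hy : y ∈ T.stableSubspaceᗮ) : ‖(T ^ n) y‖ = ‖y‖ := by
  induction n generalizing y with
  | zero => rfl
  | succ n ih =>
    rw [pow_succ, mul_apply_eq_comp, ih (apply_mem_orthogonal_stableSubspace hy),
      norm_apply_of_mem_orthogonal_stableSubspace hT hy]

theorem tendsto_adjoint_pow_comp_pow_apply (hT : ‖T‖ ≤ 1) (x : H) :
    Tendsto (fun n : ℕ => (adjoint (T ^ n) ∘L T ^ n) x) atTop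
      (𝓝 (T.stableSubspaceᗮ.starProjection x)) := by
  set K := T.stableSubspace
  set P := Kᗮ.starProjection
  have hK : IsClosed (K : Set H) := isClosed_stableSubspace (norm_pow_le_one hT)
  have hxP : x - P x ∈ K := by
    simpa only [Submodule.orthogonal_orthogonal_eq_closure, hK.submodule_topologicalClosure_eq]
      using Kᗮ.sub_starProjection_mem_orthogonal x
  have hPx : ∀ n : ℕ, adjoint (T ^ n) ((T ^ n) (P x)) = P x := fun n =>
    adjoint_apply_apply_eq_self (norm_pow_le_one hT n)
      (norm_pow_apply_of_mem_orthogonal_stableSubspace hT n (Kᗮ.starProjection_apply_mem x))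
  rw [tendsto_iff_norm_sub_tendsto_zero]
  refine squeeze_zero (fun _ => norm_nonneg _) (fun n => ?_)
    (tendsto_zero_iff_norm_tendsto_zero.mp hxP)
  calc ‖(adjoint (T ^ n) ∘L T ^ n) x - P x‖ = ‖adjoint (T ^ n) ((T ^ n) (x - P x))‖ := by
        rw [map_sub, map_sub, hPx, comp_apply]
    _ ≤ ‖(T ^ n) (x - P x)‖ := by
        refine (adjoint (T ^ n)).le_of_opNorm_le ?_ _ |>.trans_eq (one_mul _)
        simpa using norm_pow_le_one hT n

end Normal

end ContinuousLinearMap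

/-- A power bounded normal operator `N` is a contraction; it decomposes as the orthogonal
sum of a unitary operator (on `H₀(N)ᗮ`) and a `C₀₀` normal contraction (on the stable
subspace `H₀(N)`); and its asymptotic limit `A_N` is the orthogonal projection onto
`H₀(N)ᗮ`; in particular `A_N = A_{N*}`. -/
theorem stmt15 {H : Type*} [NormedAddCommGroup H] [InnerProductSpace ℂ H] [CompleteSpace H]
    (N : H →L[ℂ] H) (hnormal : adjoint N ∘L N = N ∘L adjoint N)
    (hpb : ∃ C : ℝ, ∀ n : ℕ, ‖N ^ n‖ ≤ C) :
    ‖N‖ ≤ 1 ∧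
    ∃ M : Submodule ℂ H,
      (M : Set H) = {x : H | Tendsto (fun n : ℕ => ‖(N ^ n) x‖) atTop (𝓝 0)} ∧
      IsClosed (M : Set H) ∧
      -- `M` and `Mᗮ` reduce `N`
      (∀ x ∈ M, N x ∈ M ∧ adjoint N x ∈ M) ∧
      (∀ y ∈ Mᗮ, N y ∈ Mᗮ ∧ adjoint N y ∈ Mᗮ) ∧
      -- `N` restricted to `Mᗮ` is unitary
      (∀ y ∈ Mᗮ, ‖N y‖ = ‖y‖) ∧
      (∀ y ∈ Mᗮ, ∃ z ∈ Mᗮ, N z = y) ∧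
      -- `N` restricted to `M` is of class `C₀₀`
      (∀ x ∈ M, Tendsto (fun n : ℕ => ‖(N ^ n) x‖) atTop (𝓝 0) ∧
        Tendsto (fun n : ℕ => ‖((adjoint N) ^ n) x‖) atTop (𝓝 0)) ∧
      -- the asymptotic limits of `N` and `N*` are the orthogonal projection onto `Mᗮ`
      ∃ P : H →L[ℂ] H, IsSelfAdjoint P ∧ P ∘L P = P ∧
        (∀ x : H, P x ∈ Mᗮ) ∧ (∀ y ∈ Mᗮ, P y = y) ∧
        (∀ x : H, Tendsto (fun n : ℕ => (adjoint (N ^ n) ∘L N ^ n) x) atTop (𝓝 (P x))) ∧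
        (∀ x : H, Tendsto (fun n : ℕ =>
          (adjoint ((adjoint N) ^ n) ∘L (adjoint N) ^ n) x) atTop (𝓝 (P x))) := by
  have : IsStarNormal N := ⟨hnormal⟩
  have : IsStarNormal (adjoint N) := IsStarNormal.star (x := N)
  obtain ⟨C, hC⟩ := hpb
  have hN : ‖N‖ ≤ 1 := IsStarNormal.norm_le_one_of_norm_pow_le hC
  have hN' : ‖adjoint N‖ ≤ 1 := by simpa using hN
  have hM : (adjoint N).stableSubspace = N.stableSubspace := stableSubspace_adjoint
  set M := N.stableSubspace
  have hN'M : ∀ y ∈ Mᗮ, adjoint N y ∈ Mᗮ := fun y hy =>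
    hM ▸ apply_mem_orthogonal_stableSubspace (hM ▸ hy)
  have hN'y : ∀ y ∈ Mᗮ, ‖adjoint N y‖ = ‖y‖ := fun y hy =>
    norm_apply_of_mem_orthogonal_stableSubspace hN' (hM ▸ hy)
  refine ⟨hN, M, Set.ext fun x => tendsto_zero_iff_norm_tendsto_zero,
    isClosed_stableSubspace hC,
    fun x hx => ⟨apply_mem_stableSubspace (.refl N) hx, apply_mem_stableSubspace star_comm_self hx⟩,
    fun y hy => ⟨apply_mem_orthogonal_stableSubspace hy, hN'M y hy⟩,
    fun y hy => norm_apply_of_mem_orthogonal_stableSubspace hN hy,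
    fun y hy => ⟨adjoint N y, hN'M y hy,
      by simpa using adjoint_apply_apply_eq_self hN' (hN'y y hy)⟩,
    fun x hx => ⟨tendsto_zero_iff_norm_tendsto_zero.mp hx,
      tendsto_zero_iff_norm_tendsto_zero.mp (hM ▸ hx : x ∈ (adjoint N).stableSubspace)⟩,
    Mᗮ.starProjection, isSelfAdjoint_starProjection _, Mᗮ.isIdempotentElem_starProjection.eq,
    Mᗮ.starProjection_apply_mem, fun y hy => Submodule.starProjection_eq_self_iff.mpr hy,
    tendsto_adjoint_pow_comp_pow_apply hN, fun x => ?_⟩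
  simpa only [hM] using tendsto_adjoint_pow_comp_pow_apply hN' x
end

section
/- If a power bounded operator T satisfies the class-Q inequality ‖Tx‖² ≤ (‖T²x‖² + ‖x‖²)/2 for all x, then T is a contraction. -/
open ContinuousLinearMap Filter Topology

/-- If a power bounded operator `T` satisfies the class-`Q` inequality
`‖T x‖² ≤ (‖T² x‖² + ‖x‖²) / 2` for all `x`, then `T` is a contraction. -/
theorem stmt16 {H : Type*} [NormedAddCommGroup H] [InnerProductSpace ℂ H] [CompleteSpace H]
    (T : H →L[ℂ] H) (hpb : ∃ C : ℝ, ∀ n : ℕ, ‖T ^ n‖ ≤ C)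
    (hQ : ∀ x : H, ‖T x‖ ^ 2 ≤ (‖(T ^ 2) x‖ ^ 2 + ‖x‖ ^ 2) / 2) :
    ‖T‖ ≤ 1 := by
  obtain ⟨C, hC⟩ := hpb
  have hC0 : 0 ≤ C := le_trans (norm_nonneg _) (hC 0)
  refine ContinuousLinearMap.opNorm_le_bound _ zero_le_one ?_
  intro x
  rw [one_mul]
  by_contra h
  push_neg at h
  set f : ℕ → ℝ := fun n => ‖(T ^ n) x‖ ^ 2 with hf
  set a : ℝ := ‖T x‖ ^ 2 - ‖x‖ ^ 2 with ha
  have ha0 : 0 < a := by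
    have : ‖x‖ ^ 2 < ‖T x‖ ^ 2 := by
      apply pow_lt_pow_left₀ h (norm_nonneg x)
      norm_num
    linarith
  have hstep : ∀ n, a ≤ f (n + 1) - f n := by
    intro n
    induction n with
    | zero => simp [hf, ha, pow_one, pow_zero, ContinuousLinearMap.one_apply]
    | succ n ih =>
      have hq := hQ ((T ^ n) x)
      have e1 : T ((T ^ n) x) = (T ^ (n + 1)) x := by
        rw [pow_succ']; rfl
      have e2 : (T ^ 2) ((T ^ n) x) = (T ^ (n + 2)) x := by
        rw [show n + 2 = 2 + n by ring, pow_add]; rfl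
      rw [e1, e2] at hq
      have : f (n + 1) ≤ (f (n + 2) + f n) / 2 := hq
      linarith
  have hlin : ∀ n : ℕ, f 0 + n * a ≤ f n := by
    intro n
    induction n with
    | zero => simp
    | succ n ih =>
      have := hstep n
      push_cast
      linarith
  have hbd : ∀ n : ℕ, f n ≤ C ^ 2 * ‖x‖ ^ 2 := by
    intro n
    have h1 : ‖(T ^ n) x‖ ≤ C * ‖x‖ := by
      calc ‖(T ^ n) x‖ ≤ ‖T ^ n‖ * ‖x‖ := (T ^ n).le_opNorm x
        _ ≤ C * ‖x‖ := by gcongr; exact hC n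
    calc f n = ‖(T ^ n) x‖ ^ 2 := rfl
      _ ≤ (C * ‖x‖) ^ 2 := by gcongr
      _ = C ^ 2 * ‖x‖ ^ 2 := by ring
  obtain ⟨n, hn⟩ := exists_nat_gt ((C ^ 2 * ‖x‖ ^ 2 - f 0) / a)
  have : (C ^ 2 * ‖x‖ ^ 2 - f 0) < n * a := by
    rw [div_lt_iff₀ ha0] at hn; linarith
  have := hlin n
  have := hbd n
  linarith
end

section
/- Let H be an infinite-dimensional Hilbert space and T a contraction on H similar to a unitary operator. Then dim ker(A_T − r I) ∈ {0, ∞}, where r = min σ(A_T) is the inner spectral radius of the asymptotic limit A_T; consequently r ∈ σ_e(A_T), the essential spectrum of A_T. -/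
/-!
Write `P = A - r`, which is positive because `r = min σ(A)`, and `M = ker P`. Passing to the
limit in `T*ⁿ⁺¹Tⁿ⁺¹ = T* (T*ⁿTⁿ) T` gives `⟪A T x, T x⟫ = ⟪A x, x⟫`. If `T z ∈ M` then
`r ‖z‖² ≤ ⟪A z, z⟫ = r ‖T z‖² ≤ r ‖z‖²`, so `z ∈ M` and `T` is isometric on `M` (here `r > 0`,
because `Tⁿ` is uniformly bounded below). When `M` is finite-dimensional and `T` is invertible
this forces `T M = M`, so the orbit of any `x ∈ M` is isometric and `r ‖x‖² = ⟪A x, x⟫ = ‖x‖²`.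
For `x ≠ 0` this gives `r = 1`, whence `1 ≤ A ≤ 1` and `M = H`, impossible in infinite dimension.

If `P` were Fredholm, `B P = 1 + K` with `K` compact shows that every bounded sequence killed
asymptotically by `P` has a convergent subsequence. Hence `M` is finite-dimensional, so trivial,
and then `P` is bounded below; being self-adjoint with trivial kernel it would be invertible,
contradicting `r ∈ σ(A)`.
-/

open ContinuousLinearMap Filter Topology
open scoped InnerProductSpace

section CompactPerturbation

variable {𝕜 E F : Type*} [NontriviallyNormedField 𝕜] [NormedAddCommGroup E] [NormedSpace 𝕜 E]
  [NormedAddCommGroup F] [NormedSpace 𝕜 F] {S : E →L[𝕜] F} {B : F →L[𝕜] E} {K : E →L[𝕜] E}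

theorem IsCompactOperator.exists_subseq_tendsto_of_comp_eq_one_add (hK : IsCompactOperator K)
    (hBS : B ∘L S = 1 + K) {e : ℕ → E} (he : ∀ n, ‖e n‖ ≤ 1)
    (hSe : Tendsto (fun n => S (e n)) atTop (𝓝 0)) :
    ∃ y, ∃ φ : ℕ → ℕ, StrictMono φ ∧ Tendsto (e ∘ φ) atTop (𝓝 y) := by
  have hcpt := hK.isCompact_closure_image_of_bounded (Metric.isBounded_closedBall (x := 0) (r := 1))
  obtain ⟨y, -, φ, hφ, hKe⟩ := hcpt.tendsto_subseq (x := fun n => K (e n))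
    fun n => subset_closure ⟨e n, by simpa using he n, rfl⟩
  have he_eq : e = fun n => B (S (e n)) - K (e n) := by
    ext1 n
    simp [← comp_apply B S, hBS]
  refine ⟨B 0 - y, φ, hφ, ?_⟩
  rw [he_eq]
  exact (((B.continuous.tendsto 0).comp hSe).comp hφ.tendsto_atTop).sub hKe

theorem IsCompactOperator.finiteDimensional_ker_of_comp_eq_one_add [CompleteSpace 𝕜]
    (hK : IsCompactOperator K) (hBS : B ∘L S = 1 + K) :
    FiniteDimensional 𝕜 (LinearMap.ker (S : E →ₗ[𝕜] F)) := by
  refine .of_isCompact_closedBall₀ 𝕜 zero_lt_one (IsSeqCompact.isCompact fun x hx => ?_)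
  obtain ⟨y, φ, hφ, hy⟩ := hK.exists_subseq_tendsto_of_comp_eq_one_add hBS (e := fun n => x n)
    (fun n => by simpa using hx n) (by simp)
  have hy_ker : y ∈ LinearMap.ker (S : E →ₗ[𝕜] F) :=
    (isClosed_ker S).mem_of_tendsto hy (.of_forall fun n => (x (φ n)).2)
  have hxy : Tendsto (x ∘ φ) atTop (𝓝 ⟨y, hy_ker⟩) := tendsto_subtype_rng.mpr hy
  exact ⟨_, Metric.isClosed_closedBall.mem_of_tendsto hxy (.of_forall fun n => hx (φ n)),
    φ, hφ, hxy⟩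

end CompactPerturbation

section CompactPerturbationRCLike

variable {𝕜 E F : Type*} [RCLike 𝕜] [NormedAddCommGroup E] [NormedSpace 𝕜 E]
  [NormedAddCommGroup F] [NormedSpace 𝕜 F] {S : E →L[𝕜] F}

theorem ContinuousLinearMap.exists_seq_norm_eq_one_tendsto_zero_of_not_antilipschitz
    (h : ¬ ∃ c, AntilipschitzWith c S) :
    ∃ e : ℕ → E, (∀ n, ‖e n‖ = 1) ∧ Tendsto (fun n => S (e n)) atTop (𝓝 0) := by
  rw [antilipschitzWith_iff_exists_mul_le_norm] at h
  push Not at h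
  have hx : ∀ n : ℕ, ∃ x, ‖S x‖ < 1 / (n + 1) * ‖x‖ := fun n => h _ (by positivity)
  choose x hx using hx
  have hx0 : ∀ n, x n ≠ 0 := fun n h0 => by simpa [h0] using hx n
  refine ⟨fun n => (‖x n‖⁻¹ : 𝕜) • x n, fun n => norm_smul_inv_norm (hx0 n), ?_⟩
  refine squeeze_zero_norm (fun n => ?_) tendsto_one_div_add_atTop_nhds_zero_nat
  have hpos : 0 < ‖x n‖ := norm_pos_iff.mpr (hx0 n)
  rw [map_smul, norm_smul, norm_inv, RCLike.norm_ofReal, abs_norm, inv_mul_le_iff₀ hpos]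
  linarith [hx n]

theorem IsCompactOperator.antilipschitz_of_comp_eq_one_add {B : F →L[𝕜] E} {K : E →L[𝕜] E}
    (hK : IsCompactOperator K) (hBS : B ∘L S = 1 + K)
    (hker : LinearMap.ker (S : E →ₗ[𝕜] F) = ⊥) : ∃ c, AntilipschitzWith c S := by
  by_contra h
  obtain ⟨e, he, hSe⟩ := S.exists_seq_norm_eq_one_tendsto_zero_of_not_antilipschitz h
  obtain ⟨y, φ, hφ, hy⟩ := hK.exists_subseq_tendsto_of_comp_eq_one_add hBS (fun n => (he n).le) hSe
  have hy_norm : ‖y‖ = 1 :=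
    tendsto_nhds_unique ((continuous_norm.tendsto y).comp hy) (by simp [Function.comp_def, he])
  have hSy : S y = 0 :=
    tendsto_nhds_unique ((S.continuous.tendsto y).comp hy) (hSe.comp hφ.tendsto_atTop)
  have hy0 : y ∈ LinearMap.ker (S : E →ₗ[𝕜] F) := LinearMap.mem_ker.mpr hSy
  rw [hker, Submodule.mem_bot] at hy0
  simp [hy0] at hy_norm

end CompactPerturbationRCLike

theorem Submodule.map_eq_self_of_le_map {K V : Type*} [DivisionRing K] [AddCommGroup V]
    [Module K V] {p : Submodule K V} [FiniteDimensional K p] {f : V →ₗ[K] V}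
    (hf : Function.Injective f) (h : p ≤ p.map f) : p.map f = p :=
  (eq_of_le_of_finrank_eq h (p.equivMapOfInjective f hf).finrank_eq).symm

theorem ContinuousLinearMap.norm_pow_apply_le_of_norm_le_one {𝕜 E : Type*}
    [NontriviallyNormedField 𝕜] [NormedAddCommGroup E] [NormedSpace 𝕜 E] {T : E →L[𝕜] E}
    (hT : ‖T‖ ≤ 1) (n : ℕ) (x : E) : ‖(T ^ n) x‖ ≤ ‖x‖ := by
  induction n with
  | zero => simp
  | succ n ih =>
    rw [pow_succ', mul_apply_eq_comp]
    exact (T.le_of_opNorm_le hT _).trans (by simpa using ih)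

theorem IsSelfAdjoint.isUnit_of_antilipschitz {𝕜 H : Type*} [RCLike 𝕜] [NormedAddCommGroup H]
    [InnerProductSpace 𝕜 H] [CompleteSpace H] {S : H →L[𝕜] H} (hS : IsSelfAdjoint S)
    (hker : LinearMap.ker (S : H →ₗ[𝕜] H) = ⊥) {c : NNReal} (hc : AntilipschitzWith c S) :
    IsUnit S := by
  rw [isUnit_iff_bijective, bijective_iff_dense_range_and_antilipschitz,
    Submodule.topologicalClosure_eq_top_iff, orthogonal_range, ← star_eq_adjoint, hS.star_eq]
  exact ⟨hker, c, hc⟩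

section PositiveOperators

variable {H : Type*} [NormedAddCommGroup H] [InnerProductSpace ℂ H] {A : H →L[ℂ] H} {r : ℝ}

theorem re_inner_sub_smul_one_apply (A : H →L[ℂ] H) (r : ℝ) (x : H) :
    RCLike.re ⟪(A - (r : ℂ) • 1) x, x⟫_ℂ = RCLike.re ⟪A x, x⟫_ℂ - r * ‖x‖ ^ 2 := by
  simp [← inner_self_eq_norm_sq (𝕜 := ℂ)]

theorem ContinuousLinearMap.IsPositive.mul_norm_sq_le_re_inner
    (hP : (A - (r : ℂ) • 1 : H →L[ℂ] H).IsPositive) (x : H) :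
    r * ‖x‖ ^ 2 ≤ RCLike.re ⟪A x, x⟫_ℂ := by
  linarith [hP.re_inner_nonneg_left x, re_inner_sub_smul_one_apply A r x]

variable [CompleteSpace H]

theorem ContinuousLinearMap.IsPositive.apply_eq_zero_of_re_inner_eq_zero {P : H →L[ℂ] H}
    (hP : P.IsPositive) {y : H} (h : RCLike.re ⟪P y, y⟫_ℂ = 0) : P y = 0 := by
  obtain ⟨R, rfl⟩ := CStarAlgebra.nonneg_iff_eq_star_mul_self.mp ((nonneg_iff_isPositive P).mpr hP)
  rw [mul_apply_eq_comp, star_eq_adjoint, adjoint_inner_left, inner_self_eq_norm_sq] at h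
  have hRy : R y = 0 := by simpa using h
  simp [hRy]

theorem ContinuousLinearMap.IsPositive.mem_ker_sub_smul_one_iff
    (hP : (A - (r : ℂ) • 1 : H →L[ℂ] H).IsPositive) {x : H} :
    x ∈ LinearMap.ker ((A - (r : ℂ) • 1 : H →L[ℂ] H) : H →ₗ[ℂ] H) ↔
      RCLike.re ⟪A x, x⟫_ℂ = r * ‖x‖ ^ 2 := by
  rw [LinearMap.mem_ker, coe_coe, ← sub_eq_zero (a := RCLike.re ⟪A x, x⟫_ℂ),
    ← re_inner_sub_smul_one_apply]
  exact ⟨fun h => by rw [h, inner_zero_left, map_zero], hP.apply_eq_zero_of_re_inner_eq_zero⟩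

theorem IsSelfAdjoint.isPositive_sub_smul_one (hA : IsSelfAdjoint A)
    (hr : ∀ z ∈ spectrum ℂ A, r ≤ z.re) : (A - (r : ℂ) • 1).IsPositive := by
  have hr_alg : (r : ℂ) • (1 : H →L[ℂ] H) = algebraMap ℝ _ r := by
    rw [Algebra.algebraMap_eq_smul_one, Complex.coe_smul]
  rw [← nonneg_iff_isPositive, sub_nonneg, hr_alg, algebraMap_le_iff_le_spectrum (R := ℝ) hA]
  exact fun t ht => by simpa using hr _ (spectrum.algebraMap_mem ℂ ht)

end PositiveOperators

section Similarity

variable {H : Type*} [NormedAddCommGroup H] [InnerProductSpace ℂ H] [CompleteSpace H]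
  {U : H →L[ℂ] H}

theorem norm_le_mul_norm_conj_pow_apply (hU : U ∈ unitary (H →L[ℂ] H)) (X : (H →L[ℂ] H)ˣ)
    (n : ℕ) (x : H) :
    ‖x‖ ≤ ‖(X : H →L[ℂ] H)‖ * ‖(↑X⁻¹ : H →L[ℂ] H)‖ * ‖((↑X * U * ↑X⁻¹) ^ n) x‖ := by
  rw [Units.conj_pow]
  obtain ⟨X, X', hXX', hX'X⟩ := X
  simp only [Units.inv_mk, mul_apply_eq_comp]
  set y := X' x
  have hxy : x = X y := by simp [y, ← mul_apply_eq_comp, hXX']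
  have hy : ‖y‖ = ‖X' (X ((U ^ n) y))‖ := by
    rw [← mul_apply_eq_comp X', hX'X, one_apply_eq_self, norm_map_of_mem_unitary (pow_mem hU n)]
  calc ‖x‖ ≤ ‖X‖ * ‖y‖ := hxy ▸ X.le_opNorm y
    _ ≤ ‖X‖ * (‖X'‖ * ‖X ((U ^ n) y)‖) := by rw [hy]; gcongr; exact X'.le_opNorm _
    _ = ‖X‖ * ‖X'‖ * ‖X ((U ^ n) y)‖ := by ring

theorem surjective_conj_of_mem_unitary (hU : U ∈ unitary (H →L[ℂ] H)) (X : (H →L[ℂ] H)ˣ) :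
    Function.Surjective (↑X * U * ↑X⁻¹ : H →L[ℂ] H) :=
  (isUnit_iff_bijective.mp
    ((X.isUnit.mul (Unitary.isUnit_coe (U := ⟨U, hU⟩))).mul X⁻¹.isUnit)).2

end Similarity

section AsymptoticLimit

variable {H : Type*} [NormedAddCommGroup H] [InnerProductSpace ℂ H] [CompleteSpace H]

def IsAsymptoticLimit (T A : H →L[ℂ] H) : Prop :=
  ∀ x : H, Tendsto (fun n : ℕ => (adjoint (T ^ n) ∘L T ^ n) x) atTop (𝓝 (A x))

namespace IsAsymptoticLimit

variable {T A : H →L[ℂ] H} {r : ℝ}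

theorem tendsto_norm_sq (hA : IsAsymptoticLimit T A) (x : H) :
    Tendsto (fun n : ℕ => ‖(T ^ n) x‖ ^ 2) atTop (𝓝 (RCLike.re ⟪A x, x⟫_ℂ)) := by
  have h := (RCLike.continuous_re.tendsto _).comp
    ((hA x).inner (𝕜 := ℂ) (tendsto_const_nhds (x := x)))
  simpa only [Function.comp_def, comp_apply, adjoint_inner_left, inner_self_eq_norm_sq] using h

theorem isSelfAdjoint (hA : IsAsymptoticLimit T A) : IsSelfAdjoint A := by
  refine isSelfAdjoint_iff_isSymmetric.mpr fun x y =>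
    tendsto_nhds_unique ((hA x).inner (𝕜 := ℂ) tendsto_const_nhds) ?_
  simpa only [coe_coe, comp_apply, adjoint_inner_left, adjoint_inner_right] using
    (tendsto_const_nhds (x := x)).inner (𝕜 := ℂ) (hA y)

theorem re_inner_map_map (hA : IsAsymptoticLimit T A) (x : H) :
    RCLike.re ⟪A (T x), T x⟫_ℂ = RCLike.re ⟪A x, x⟫_ℂ := by
  refine tendsto_nhds_unique (hA.tendsto_norm_sq (T x)) ?_
  have h_succ : ∀ n : ℕ, (T ^ (n + 1)) x = (T ^ n) (T x) := fun n => by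
    rw [pow_succ, mul_apply_eq_comp]
  simpa only [Function.comp_def, h_succ] using
    (hA.tendsto_norm_sq x).comp (tendsto_add_atTop_nat 1)

theorem re_inner_le_norm_sq (hA : IsAsymptoticLimit T A) (hT : ‖T‖ ≤ 1) (x : H) :
    RCLike.re ⟪A x, x⟫_ℂ ≤ ‖x‖ ^ 2 :=
  le_of_tendsto' (hA.tendsto_norm_sq x) fun n => by
    gcongr; exact T.norm_pow_apply_le_of_norm_le_one hT n x

theorem norm_sq_le_mul_re_inner (hA : IsAsymptoticLimit T A) {C : ℝ}
    (hC : ∀ n x, ‖x‖ ≤ C * ‖(T ^ n) x‖) (x : H) :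
    ‖x‖ ^ 2 ≤ C ^ 2 * RCLike.re ⟪A x, x⟫_ℂ :=
  ge_of_tendsto' ((hA.tendsto_norm_sq x).const_mul _) fun n => by
    rw [← mul_pow]; gcongr; exact hC n x

theorem re_inner_eq_norm_sq (hA : IsAsymptoticLimit T A) {x : H}
    (hx : ∀ n, ‖(T ^ n) x‖ = ‖x‖) : RCLike.re ⟪A x, x⟫_ℂ = ‖x‖ ^ 2 :=
  tendsto_nhds_unique (hA.tendsto_norm_sq x) (by simp only [hx]; exact tendsto_const_nhds)

theorem pos_of_mem_ker (hA : IsAsymptoticLimit T A) {C : ℝ} (hC : ∀ n x, ‖x‖ ≤ C * ‖(T ^ n) x‖)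
    (hP : (A - (r : ℂ) • 1 : H →L[ℂ] H).IsPositive) {x : H}
    (hx : x ∈ LinearMap.ker ((A - (r : ℂ) • 1 : H →L[ℂ] H) : H →ₗ[ℂ] H)) (hx0 : x ≠ 0) :
    0 < r := by
  have h := hA.norm_sq_le_mul_re_inner hC x
  rw [hP.mem_ker_sub_smul_one_iff.mp hx] at h
  have : 0 < ‖x‖ ^ 2 := by positivity
  by_contra! hr
  nlinarith [mul_nonneg (sq_nonneg C) this.le]

theorem mem_ker_and_norm_eq_of_apply_mem_ker (hA : IsAsymptoticLimit T A) (hT : ‖T‖ ≤ 1)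
    (hr : 0 < r) (hP : (A - (r : ℂ) • 1 : H →L[ℂ] H).IsPositive) {z : H}
    (hz : T z ∈ LinearMap.ker ((A - (r : ℂ) • 1 : H →L[ℂ] H) : H →ₗ[ℂ] H)) :
    z ∈ LinearMap.ker ((A - (r : ℂ) • 1 : H →L[ℂ] H) : H →ₗ[ℂ] H) ∧ ‖T z‖ = ‖z‖ := by
  have hz_eq : RCLike.re ⟪A z, z⟫_ℂ = r * ‖T z‖ ^ 2 :=
    (hA.re_inner_map_map z).symm.trans (hP.mem_ker_sub_smul_one_iff.mp hz)
  have hle : ‖T z‖ ≤ ‖z‖ := by simpa using T.norm_pow_apply_le_of_norm_le_one hT 1 z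
  have hge : ‖z‖ ≤ ‖T z‖ := by
    have := hP.mul_norm_sq_le_re_inner z
    rw [hz_eq, mul_le_mul_iff_right₀ hr] at this
    exact (pow_le_pow_iff_left₀ (norm_nonneg _) (norm_nonneg _) two_ne_zero).mp this
  have hnorm := le_antisymm hle hge
  exact ⟨hP.mem_ker_sub_smul_one_iff.mpr (hnorm ▸ hz_eq), hnorm⟩

theorem apply_mem_ker_and_norm_eq (hA : IsAsymptoticLimit T A) (hT : ‖T‖ ≤ 1)
    (hT_bij : Function.Bijective T) (hr : 0 < r)
    (hP : (A - (r : ℂ) • 1 : H →L[ℂ] H).IsPositive)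
    [FiniteDimensional ℂ (LinearMap.ker ((A - (r : ℂ) • 1 : H →L[ℂ] H) : H →ₗ[ℂ] H))] {x : H}
    (hx : x ∈ LinearMap.ker ((A - (r : ℂ) • 1 : H →L[ℂ] H) : H →ₗ[ℂ] H)) :
    T x ∈ LinearMap.ker ((A - (r : ℂ) • 1 : H →L[ℂ] H) : H →ₗ[ℂ] H) ∧ ‖T x‖ = ‖x‖ := by
  have hmap : (LinearMap.ker ((A - (r : ℂ) • 1 : H →L[ℂ] H) : H →ₗ[ℂ] H)).map (T : H →ₗ[ℂ] H) =
      LinearMap.ker ((A - (r : ℂ) • 1 : H →L[ℂ] H) : H →ₗ[ℂ] H) := by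
    refine Submodule.map_eq_self_of_le_map hT_bij.1 fun z hz => ?_
    obtain ⟨z', rfl⟩ := hT_bij.2 z
    exact ⟨z', (hA.mem_ker_and_norm_eq_of_apply_mem_ker hT hr hP hz).1, rfl⟩
  have hTx : T x ∈ LinearMap.ker ((A - (r : ℂ) • 1 : H →L[ℂ] H) : H →ₗ[ℂ] H) :=
    hmap ▸ Submodule.mem_map_of_mem hx
  exact ⟨hTx, (hA.mem_ker_and_norm_eq_of_apply_mem_ker hT hr hP hTx).2⟩

theorem ker_sub_smul_one_eq_top (hA : IsAsymptoticLimit T A) (hT : ‖T‖ ≤ 1)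
    (hT_surj : Function.Surjective T) {C : ℝ} (hC : ∀ n x, ‖x‖ ≤ C * ‖(T ^ n) x‖)
    (hP : (A - (r : ℂ) • 1 : H →L[ℂ] H).IsPositive)
    [FiniteDimensional ℂ (LinearMap.ker ((A - (r : ℂ) • 1 : H →L[ℂ] H) : H →ₗ[ℂ] H))]
    (hne : LinearMap.ker ((A - (r : ℂ) • 1 : H →L[ℂ] H) : H →ₗ[ℂ] H) ≠ ⊥) :
    LinearMap.ker ((A - (r : ℂ) • 1 : H →L[ℂ] H) : H →ₗ[ℂ] H) = ⊤ := by
  obtain ⟨x, hx, hx0⟩ := Submodule.exists_mem_ne_zero_of_ne_bot hne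
  have hr := hA.pos_of_mem_ker hC hP hx hx0
  have hT_inj : Function.Injective T := by
    refine (injective_iff_map_eq_zero T).mpr fun y hy => norm_le_zero_iff.mp ?_
    simpa [hy] using hC 1 y
  have horbit : ∀ n, (T ^ n) x ∈ LinearMap.ker ((A - (r : ℂ) • 1 : H →L[ℂ] H) : H →ₗ[ℂ] H) ∧
      ‖(T ^ n) x‖ = ‖x‖ := by
    intro n
    induction n with
    | zero => simpa using hx
    | succ n ih =>
      rw [pow_succ', mul_apply_eq_comp]
      have h := hA.apply_mem_ker_and_norm_eq hT ⟨hT_inj, hT_surj⟩ hr hP ih.1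
      exact ⟨h.1, h.2.trans ih.2⟩
  have hr1 : r = 1 := by
    have h := (hP.mem_ker_sub_smul_one_iff.mp hx).symm.trans
      (hA.re_inner_eq_norm_sq fun n => (horbit n).2)
    exact (mul_eq_right₀ (by positivity)).mp h
  subst hr1
  refine eq_top_iff.mpr fun y _ => hP.mem_ker_sub_smul_one_iff.mpr ?_
  linarith [hA.re_inner_le_norm_sq hT y, hP.mul_norm_sq_le_re_inner y]

end IsAsymptoticLimit

end AsymptoticLimit

/-- Let `H` be infinite-dimensional and `T` a contraction similar to a unitary operator,
with asymptotic limit `A = A_T` and `r = min σ(A)`.  Then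
`dim ker (A − r·I) ∈ {0, ∞}` (i.e. if that kernel is finite-dimensional it is trivial);
consequently `r` belongs to the essential spectrum of `A`, i.e. `A − r·I` is not
invertible modulo compact operators. -/
theorem stmt17 {H : Type*} [NormedAddCommGroup H] [InnerProductSpace ℂ H] [CompleteSpace H]
    (hdim : ¬ FiniteDimensional ℂ H)
    (T : H →L[ℂ] H) (hT : ‖T‖ ≤ 1)
    (hsim : ∃ X X' U : H →L[ℂ] H, X ∘L X' = 1 ∧ X' ∘L X = 1 ∧
      U ∈ unitary (H →L[ℂ] H) ∧ T = X ∘L U ∘L X')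
    (A : H →L[ℂ] H)
    (hA : ∀ x : H, Tendsto (fun n : ℕ => (adjoint (T ^ n) ∘L T ^ n) x) atTop (𝓝 (A x)))
    (r : ℝ) (hr : (r : ℂ) ∈ spectrum ℂ A)
    (hrmin : ∀ z ∈ spectrum ℂ A, r ≤ z.re) :
    (FiniteDimensional ℂ (LinearMap.ker ((A - (r : ℂ) • (1 : H →L[ℂ] H) : H →L[ℂ] H) : H →ₗ[ℂ] H)) →
      LinearMap.ker ((A - (r : ℂ) • (1 : H →L[ℂ] H) : H →L[ℂ] H) : H →ₗ[ℂ] H) = ⊥) ∧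
    ¬ ∃ B K₁ K₂ : H →L[ℂ] H, IsCompactOperator (⇑K₁) ∧ IsCompactOperator (⇑K₂) ∧
        B ∘L (A - (r : ℂ) • (1 : H →L[ℂ] H)) = 1 + K₁ ∧
        (A - (r : ℂ) • (1 : H →L[ℂ] H)) ∘L B = 1 + K₂ := by
  obtain ⟨X, X', U, hXX', hX'X, hU, rfl⟩ := hsim
  let X₀ : (H →L[ℂ] H)ˣ := ⟨X, X', hXX', hX'X⟩
  have hT_eq : X ∘L U ∘L X' = (X₀ : H →L[ℂ] H) * U * ↑X₀⁻¹ := (mul_assoc X U X').symm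
  rw [hT_eq] at hT hA
  replace hA : IsAsymptoticLimit _ A := hA
  have hP := hA.isSelfAdjoint.isPositive_sub_smul_one hrmin
  have hker : FiniteDimensional ℂ (LinearMap.ker ((A - (r : ℂ) • 1 : H →L[ℂ] H) : H →ₗ[ℂ] H)) →
      LinearMap.ker ((A - (r : ℂ) • 1 : H →L[ℂ] H) : H →ₗ[ℂ] H) = ⊥ := by
    intro hfin
    by_contra hne
    have htop := hA.ker_sub_smul_one_eq_top hT (surjective_conj_of_mem_unitary hU X₀)
      (norm_le_mul_norm_conj_pow_apply hU X₀) hP hne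
    rw [htop] at hfin
    exact hdim (Module.Finite.equiv (Submodule.topEquiv (R := ℂ) (M := H)))
  refine ⟨hker, ?_⟩
  rintro ⟨B, K₁, -, hK₁, -, hBK₁, -⟩
  have hinj := hker (hK₁.finiteDimensional_ker_of_comp_eq_one_add hBK₁)
  obtain ⟨c, hc⟩ := hK₁.antilipschitz_of_comp_eq_one_add hBK₁ hinj
  refine spectrum.mem_iff.mp hr ?_
  rw [Algebra.algebraMap_eq_smul_one, ← neg_sub, IsUnit.neg_iff]
  exact hP.isSelfAdjoint.isUnit_of_antilipschitz hinj hc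
end

section
/- Suppose A is a positive invertible contraction on a Hilbert space H, H = ⊕_{k∈ℤ} Y_k is an orthogonal decomposition into subspaces reducing A, and U is a unitary on H with U Y_k = Y_{k+1} for all k, lim_{k→∞} min σ(A|Y_k) = 1, and ‖A^{1/2} y‖ ≤ ‖A^{1/2} U y‖ for every y ∈ Y_k and k ∈ ℤ. Then T := A^{-1/2} U A^{1/2} is a contraction whose asymptotic limit A_T equals A. -/
open ContinuousLinearMap Filter Topology

open scoped InnerProductSpace

/-!
`T = S⁻¹US` is similar to `U`, so `Tⁿ = S⁻¹UⁿS` and, as `S⁻²(1 - A) = S⁻² - 1`,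
`T*ⁿTⁿ - A = SU*ⁿS⁻²(1 - A)UⁿS`. Thus `A_T = A` reduces to `(1 - A)Uⁿz → 0` for every `z`.
For `z ∈ Y_k` this holds because `Uⁿz ∈ Y_{k+n}`, where the form of `A` is close to `‖·‖²`,
and `‖y - Ay‖² ≤ 2(‖y‖² - Re⟨Ay, y⟩)` for a contraction `A`; it spreads to all of `H` by
linearity and density, the operators `(1 - A)Uⁿ` being uniformly bounded.

For contractivity, `‖Sx‖² = Re⟨Ax, x⟩` is additive over the orthogonal decomposition, for `x`
as well as for `Ux` (the `U Y_k` are again pairwise orthogonal), so `‖Sy‖ ≤ ‖SUy‖` passes from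
the `Y_k` to their span and then to `H`. Hence `‖T*z‖ = ‖SU*S⁻¹z‖ ≤ ‖SUU*S⁻¹z‖ = ‖z‖`.
-/

section Algebra

variable {R : Type*} [Ring R] [StarRing R]

theorem isSelfAdjoint_of_mul_eq_one {S S' : R} (hS : IsSelfAdjoint S) (hSS' : S * S' = 1) :
    IsSelfAdjoint S' := by
  have h : star S' * S = 1 := by rw [← hS.star_eq, ← star_mul, hSS', star_one]
  calc star S' = star S' * S * S' := by rw [mul_assoc, hSS', mul_one]
    _ = S' := by rw [h, one_mul]

theorem star_pow_mul_pow_sub_eq {S S' U A : R} (hS : IsSelfAdjoint S) (hSA : S * S = A)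
    (hSS' : S * S' = 1) (hS'S : S' * S = 1) (hU : U ∈ unitary R) (n : ℕ) :
    star ((S' * (U * S)) ^ n) * (S' * (U * S)) ^ n - A
      = S * star U ^ n * (S' * S') * ((1 - A) * U ^ n * S) := by
  have hpow : ∀ m : ℕ, (S' * (U * S)) ^ m = S' * (U ^ m * S) := by
    intro m
    induction m with
    | zero => simpa using hS'S.symm
    | succ m ih =>
      rw [pow_succ, ih, pow_succ]
      calc S' * (U ^ m * S) * (S' * (U * S)) = S' * (U ^ m * (S * S') * (U * S)) := by
            simp only [mul_assoc]
        _ = S' * (U ^ m * U * S) := by rw [hSS', mul_one, mul_assoc]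
  have hUn : star U ^ n * U ^ n = 1 := by
    rw [← star_pow]; exact Unitary.star_mul_self_of_mem (pow_mem hU n)
  have hS'A : S' * S' * (1 - A) = S' * S' - 1 := by
    rw [mul_sub, mul_one, ← hSA, mul_assoc S', ← mul_assoc S' S, hS'S, one_mul, hS'S]
  rw [hpow, star_mul, star_mul, (isSelfAdjoint_of_mul_eq_one hS hSS').star_eq, hS.star_eq,
    star_pow]
  calc S * star U ^ n * S' * (S' * (U ^ n * S)) - A
        = S * star U ^ n * (S' * S') * U ^ n * S - S * (star U ^ n * U ^ n) * S := by
          rw [hUn, mul_one, hSA]; simp only [mul_assoc]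
    _ = S * star U ^ n * (S' * S' * (1 - A)) * U ^ n * S := by
          rw [hS'A]; noncomm_ring
    _ = S * star U ^ n * (S' * S') * ((1 - A) * U ^ n * S) := by simp only [mul_assoc]

end Algebra

theorem tendsto_zero_of_dense_iSup {𝕜 E F α ι : Type*} [NontriviallyNormedField 𝕜]
    [NormedAddCommGroup E] [NormedSpace 𝕜 E] [NormedAddCommGroup F] [NormedSpace 𝕜 F]
    {l : Filter α} {B : α → E →L[𝕜] F} (hB : ∃ C, ∀ n x, ‖B n x‖ ≤ C * ‖x‖)
    {Y : ι → Submodule 𝕜 E} (hdense : (⨆ k, Y k).topologicalClosure = ⊤)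
    (hY : ∀ k, ∀ z ∈ Y k, Tendsto (fun n => B n z) l (𝓝 0)) (x : E) :
    Tendsto (fun n => B n x) l (𝓝 0) := by
  refine (Submodule.dense_iff_topologicalClosure_eq_top.mpr hdense).induction (fun z hz => ?_)
    ?_ x
  · refine Submodule.iSup_induction Y (motive := fun z => Tendsto (fun n => B n z) l (𝓝 0)) hz hY
      (by simpa using tendsto_const_nhds) fun z w hz hw => ?_
    simpa using hz.add hw
  · exact Equicontinuous.isClosed_setOfPred_tendsto
      (((NormedSpace.equicontinuous_TFAE B).out 3 1).mp hB) continuous_const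

section InnerProduct

variable {𝕜 E : Type*} [RCLike 𝕜] [NormedAddCommGroup E] [InnerProductSpace 𝕜 E]

open RCLike

theorem inner_map_sum_eq_sum_inner_map {ι κ : Type*} {Y : κ → Submodule 𝕜 E}
    (hY : Pairwise fun j k => Y j ⟂ Y k) {A : E →L[𝕜] E} (hA : ∀ k, ∀ y ∈ Y k, A y ∈ Y k)
    {σ : ι → κ} (hσ : Function.Injective σ) (s : Finset ι) {x : ι → E}
    (hx : ∀ i, x i ∈ Y (σ i)) :
    ⟪A (∑ i ∈ s, x i), ∑ i ∈ s, x i⟫_𝕜 = ∑ i ∈ s, ⟪A (x i), x i⟫_𝕜 := by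
  rw [map_sum, sum_inner]
  refine Finset.sum_congr rfl fun i hi => ?_
  rw [inner_sum, Finset.sum_eq_single_of_mem i hi]
  intro j _ hji
  exact Submodule.isOrtho_iff_inner_eq.mp (hY (hσ.ne hji.symm)) _ (hA _ _ (hx i)) _ (hx j)

theorem re_inner_map_self_le_of_dense_iSup {ι : Type*} {Y : ι → Submodule 𝕜 E}
    (hY : Pairwise fun j k => Y j ⟂ Y k) (hdense : (⨆ k, Y k).topologicalClosure = ⊤)
    {A U : E →L[𝕜] E} (hA : ∀ k, ∀ y ∈ Y k, A y ∈ Y k) {σ : ι → ι}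
    (hσ : Function.Injective σ) (hU : ∀ k, ∀ y ∈ Y k, U y ∈ Y (σ k))
    (hmono : ∀ k, ∀ y ∈ Y k, re ⟪A y, y⟫_𝕜 ≤ re ⟪A (U y), U y⟫_𝕜) (x : E) :
    re ⟪A x, x⟫_𝕜 ≤ re ⟪A (U x), U x⟫_𝕜 := by
  refine (Submodule.dense_iff_topologicalClosure_eq_top.mpr hdense).induction (fun x hx => ?_)
    (isClosed_le (by fun_prop) (by fun_prop)) x
  obtain ⟨f, hf, rfl⟩ := (Submodule.mem_iSup_iff_exists_finsupp _ _).mp hx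
  rw [Finsupp.sum, inner_map_sum_eq_sum_inner_map hY hA Function.injective_id _ hf, map_sum U,
    inner_map_sum_eq_sum_inner_map hY hA hσ _ fun i => hU i _ (hf i), map_sum, map_sum]
  exact Finset.sum_le_sum fun i _ => hmono i _ (hf i)

theorem norm_sub_apply_sq_le {A : E →L[𝕜] E} (hA : ‖A‖ ≤ 1) (y : E) :
    ‖y - A y‖ ^ 2 ≤ 2 * (‖y‖ ^ 2 - re ⟪A y, y⟫_𝕜) := by
  have hAy : ‖A y‖ ≤ ‖y‖ := by simpa using A.le_of_opNorm_le hA y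
  rw [norm_sub_sq (𝕜 := 𝕜), inner_re_symm (𝕜 := 𝕜)]
  nlinarith [norm_nonneg (A y)]

variable [CompleteSpace E]

theorem tendsto_one_sub_mul_pow_apply_of_mem {Y : ℤ → Submodule 𝕜 E} {A U : E →L[𝕜] E}
    (hA : ‖A‖ ≤ 1) (hU : U ∈ unitary (E →L[𝕜] E)) (hUY : ∀ k, ∀ y ∈ Y k, U y ∈ Y (k + 1))
    (hmin : ∀ ε : ℝ, 0 < ε → ∃ N : ℤ, ∀ k ≥ N, ∀ y ∈ Y k, (1 - ε) * ‖y‖ ^ 2 ≤ re ⟪A y, y⟫_𝕜)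
    {k : ℤ} {z : E} (hz : z ∈ Y k) :
    Tendsto (fun n : ℕ => ((1 - A) * U ^ n) z) atTop (𝓝 0) := by
  have hmem : ∀ n : ℕ, (U ^ n) z ∈ Y (k + n) := by
    intro n
    induction n with
    | zero => simpa using hz
    | succ n ih => rw [Nat.cast_succ, ← add_assoc, pow_succ']; exact hUY _ _ ih
  rw [Metric.tendsto_atTop]
  intro a ha
  set ε := a ^ 2 / (2 * (‖z‖ ^ 2 + 1))
  have hε : 2 * ε * ‖z‖ ^ 2 < a ^ 2 := by
    rw [show 2 * ε * ‖z‖ ^ 2 = a ^ 2 * (‖z‖ ^ 2 / (‖z‖ ^ 2 + 1)) by simp only [ε]; field_simp]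
    exact mul_lt_of_lt_one_right (by positivity) ((div_lt_one (by positivity)).2 (lt_add_one _))
  obtain ⟨N, hN⟩ := hmin ε (by positivity)
  refine ⟨(N - k).toNat, fun n hn => ?_⟩
  have hy := hN (k + n) (by omega) _ (hmem n)
  rw [norm_map_of_mem_unitary (pow_mem hU n)] at hy
  rw [dist_zero_right]
  refine lt_of_pow_lt_pow_left₀ 2 ha.le ?_
  calc ‖((1 - A) * U ^ n) z‖ ^ 2 ≤ 2 * (‖(U ^ n) z‖ ^ 2 - re ⟪A ((U ^ n) z), (U ^ n) z⟫_𝕜) :=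
        norm_sub_apply_sq_le hA _
    _ ≤ 2 * ε * ‖z‖ ^ 2 := by rw [norm_map_of_mem_unitary (pow_mem hU n)]; linarith
    _ < a ^ 2 := hε

theorem tendsto_one_sub_mul_pow_apply {Y : ℤ → Submodule 𝕜 E} {A U : E →L[𝕜] E}
    (hdense : (⨆ k, Y k).topologicalClosure = ⊤) (hA : ‖A‖ ≤ 1)
    (hU : U ∈ unitary (E →L[𝕜] E)) (hUY : ∀ k, ∀ y ∈ Y k, U y ∈ Y (k + 1))
    (hmin : ∀ ε : ℝ, 0 < ε → ∃ N : ℤ, ∀ k ≥ N, ∀ y ∈ Y k, (1 - ε) * ‖y‖ ^ 2 ≤ re ⟪A y, y⟫_𝕜)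
    (z : E) : Tendsto (fun n : ℕ => ((1 - A) * U ^ n) z) atTop (𝓝 0) := by
  refine tendsto_zero_of_dense_iSup ⟨‖1 - A‖, fun n x => ?_⟩ hdense
    (fun k _ hz => tendsto_one_sub_mul_pow_apply_of_mem hA hU hUY hmin hz) z
  calc ‖(1 - A) ((U ^ n) x)‖ ≤ ‖1 - A‖ * ‖(U ^ n) x‖ := le_opNorm _ _
    _ = ‖1 - A‖ * ‖x‖ := by rw [norm_map_of_mem_unitary (pow_mem hU n)]

theorem norm_conj_le_one_of_norm_apply_le {S S' U : E →L[𝕜] E} (hS : IsSelfAdjoint S)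
    (hSS' : S * S' = 1) (hU : U ∈ unitary (E →L[𝕜] E))
    (hmono : ∀ x, ‖S x‖ ≤ ‖S (U x)‖) : ‖S' * (U * S)‖ ≤ 1 := by
  rw [← norm_star, star_mul, star_mul, hS.star_eq, (isSelfAdjoint_of_mul_eq_one hS hSS').star_eq]
  refine opNorm_le_bound _ zero_le_one fun z => ?_
  have hUU : U (star U (S' z)) = S' z := by
    simpa using DFunLike.congr_fun (Unitary.mul_star_self_of_mem hU) (S' z)
  have hSS'z : S (S' z) = z := by simpa using DFunLike.congr_fun hSS' z
  calc ‖S (star U (S' z))‖ ≤ ‖S (U (star U (S' z)))‖ := hmono _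
    _ = 1 * ‖z‖ := by rw [hUU, hSS'z, one_mul]

theorem tendsto_star_pow_mul_pow_apply {S S' U A : E →L[𝕜] E} (hS : IsSelfAdjoint S)
    (hSA : S * S = A) (hSS' : S * S' = 1) (hS'S : S' * S = 1) (hU : U ∈ unitary (E →L[𝕜] E))
    (hlim : ∀ z, Tendsto (fun n : ℕ => ((1 - A) * U ^ n) z) atTop (𝓝 0)) (x : E) :
    Tendsto (fun n : ℕ => (star ((S' * (U * S)) ^ n) * (S' * (U * S)) ^ n) x) atTop
      (𝓝 (A x)) := by
  rw [tendsto_iff_norm_sub_tendsto_zero]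
  refine squeeze_zero (fun n => norm_nonneg _) (fun n => ?_)
    (by simpa only [norm_zero, mul_zero] using (hlim (S x)).norm.const_mul (‖S‖ * ‖S'‖ * ‖S'‖))
  set v := ((1 - A) * U ^ n) (S x)
  calc ‖(star ((S' * (U * S)) ^ n) * (S' * (U * S)) ^ n) x - A x‖
      = ‖S ((star U ^ n) (S' (S' v)))‖ := by
        rw [← sub_apply, star_pow_mul_pow_sub_eq hS hSA hSS' hS'S hU n]; rfl
    _ ≤ ‖S‖ * ‖S' (S' v)‖ := by
        rw [← star_pow]
        exact (le_opNorm _ _).trans_eq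
          (by rw [norm_map_of_mem_unitary (Unitary.star_mem (pow_mem hU n))])
    _ ≤ ‖S‖ * (‖S'‖ * (‖S'‖ * ‖v‖)) := by
        gcongr
        exact (le_opNorm _ _).trans (by gcongr; exact le_opNorm _ _)
    _ = ‖S‖ * ‖S'‖ * ‖S'‖ * ‖v‖ := by ring

end InnerProduct

theorem stmt18_general {H : Type*} [NormedAddCommGroup H] [InnerProductSpace ℂ H] [CompleteSpace H]
    (A : H →L[ℂ] H) (hAcontr : ‖A‖ ≤ 1)
    (S S' : H →L[ℂ] H) (hSpos : S.IsPositive) (hSA : S ∘L S = A)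
    (hSS' : S ∘L S' = 1) (hS'S : S' ∘L S = 1)
    (Y : ℤ → Submodule ℂ H)
    (horth : ∀ j k : ℤ, j ≠ k → ∀ x ∈ Y j, ∀ y ∈ Y k, (inner ℂ x y : ℂ) = 0)
    (hspan : (⨆ k : ℤ, Y k).topologicalClosure = ⊤)
    (hred : ∀ k : ℤ, ∀ y ∈ Y k, A y ∈ Y k ∧ adjoint A y ∈ Y k)
    (U : H →L[ℂ] H) (hU : U ∈ unitary (H →L[ℂ] H))
    (hshift : ∀ k : ℤ, (Y k).map (U : H →ₗ[ℂ] H) = Y (k + 1))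
    (hmin : ∀ ε : ℝ, 0 < ε → ∃ N : ℤ, ∀ k ≥ N, ∀ y ∈ Y k,
      (1 - ε) * ‖y‖ ^ 2 ≤ RCLike.re (inner ℂ (A y) y : ℂ))
    (hmono : ∀ k : ℤ, ∀ y ∈ Y k, ‖S y‖ ≤ ‖S (U y)‖) :
    ‖S' ∘L U ∘L S‖ ≤ 1 ∧
    ∀ x : H, Tendsto
      (fun n : ℕ => (adjoint ((S' ∘L U ∘L S) ^ n) ∘L (S' ∘L U ∘L S) ^ n) x)
      atTop (𝓝 (A x)) := by
  have hS : IsSelfAdjoint S := hSpos.isSelfAdjoint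
  have hUY : ∀ k, ∀ y ∈ Y k, U y ∈ Y (k + 1) := fun k y hy =>
    hshift k ▸ Submodule.mem_map_of_mem hy
  have hnormS : ∀ x, RCLike.re ⟪A x, x⟫_ℂ = ‖S x‖ ^ 2 := fun x => by
    rw [apply_norm_sq_eq_inner_adjoint_left, ← star_eq_adjoint, hS.star_eq, ← hSA]
  have hmonoH : ∀ x, ‖S x‖ ≤ ‖S (U x)‖ := fun x => by
    have := re_inner_map_self_le_of_dense_iSup
      (fun j k hjk => Submodule.isOrtho_iff_inner_eq.mpr (horth j k hjk)) hspan
      (fun k y hy => (hred k y hy).1) (add_left_injective 1) hUY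
      (fun k y hy => by rw [hnormS, hnormS]; gcongr; exact hmono k y hy) x
    rwa [hnormS, hnormS, pow_le_pow_iff_left₀ (norm_nonneg _) (norm_nonneg _) two_ne_zero] at this
  exact ⟨norm_conj_le_one_of_norm_apply_le hS hSS' hU hmonoH,
    tendsto_star_pow_mul_pow_apply hS hSA hSS' hS'S hU
      (tendsto_one_sub_mul_pow_apply hspan hAcontr hU hUY hmin)⟩

/-- Suppose `A` is a positive invertible contraction, `H = ⊕_{k ∈ ℤ} Y_k` is an orthogonal
decomposition into subspaces reducing `A`, and `U` is a unitary with `U Y_k = Y_{k+1}`,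
`lim_{k → ∞} min σ(A|Y_k) = 1` and `‖A^{1/2} y‖ ≤ ‖A^{1/2} (U y)‖` for every `y ∈ Y_k`.
Then `T := A^{-1/2} U A^{1/2}` is a contraction whose asymptotic limit is `A`.
(Here `S` denotes the positive square root `A^{1/2}` and `S'` its inverse.) -/
theorem stmt18 {H : Type*} [NormedAddCommGroup H] [InnerProductSpace ℂ H] [CompleteSpace H]
    (A : H →L[ℂ] H) (hApos : A.IsPositive) (hAcontr : ‖A‖ ≤ 1) (hAinv : IsUnit A)
    (S S' : H →L[ℂ] H) (hSpos : S.IsPositive) (hSA : S ∘L S = A)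
    (hSS' : S ∘L S' = 1) (hS'S : S' ∘L S = 1)
    (Y : ℤ → Submodule ℂ H)
    (horth : ∀ j k : ℤ, j ≠ k → ∀ x ∈ Y j, ∀ y ∈ Y k, (inner ℂ x y : ℂ) = 0)
    (hspan : (⨆ k : ℤ, Y k).topologicalClosure = ⊤)
    (hred : ∀ k : ℤ, ∀ y ∈ Y k, A y ∈ Y k ∧ adjoint A y ∈ Y k)
    (U : H →L[ℂ] H) (hU : U ∈ unitary (H →L[ℂ] H))
    (hshift : ∀ k : ℤ, (Y k).map (U : H →ₗ[ℂ] H) = Y (k + 1))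
    (hmin : ∀ ε : ℝ, 0 < ε → ∃ N : ℤ, ∀ k ≥ N, ∀ y ∈ Y k,
      (1 - ε) * ‖y‖ ^ 2 ≤ RCLike.re (inner ℂ (A y) y : ℂ))
    (hmono : ∀ k : ℤ, ∀ y ∈ Y k, ‖S y‖ ≤ ‖S (U y)‖) :
    ‖S' ∘L U ∘L S‖ ≤ 1 ∧
    ∀ x : H, Tendsto
      (fun n : ℕ => (adjoint ((S' ∘L U ∘L S) ^ n) ∘L (S' ∘L U ∘L S) ^ n) x)
      atTop (𝓝 (A x)) :=
  stmt18_general A hAcontr S S' hSpos hSA hSS' hS'S Y horth hspan hred U hU hshift hmin hmono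
end

section
/- Let W = ⊕_{i∈I} W_i be an orthogonal sum of weighted bilateral shift operators, with W power bounded and each W_i similar to a unitary operator. If W is similar to a normal operator, then W is similar to a unitary operator. -/
/-!
Transport the problem to the normal operator `N` similar to `W`. Since `N` is power bounded, its
spectrum lies in the closed unit disc. If it contained a point `z` with `‖z‖ < 1`, the functional
calculus would give a nonzero `B = f(N)`, for a bump `f` around `z` supported in a disc of radius
`r < 1`, with `‖N ^ n * B‖ ≤ r ^ n`; so some nonzero orbit of `N` tends to `0`, and hence so does
some nonzero orbit of `W`. But then one coordinate of that orbit is a nonzero orbit of some `W_i`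
tending to `0`, which is impossible because `W_i` is similar to a unitary operator. Hence the
spectrum of `N` lies on the unit circle, and a normal operator with this property is unitary.
-/

open ContinuousLinearMap Filter Topology

lemma Complex.mem_unitary_of_norm_eq_one {z : ℂ} (hz : ‖z‖ = 1) : z ∈ unitary ℂ := by
  rw [Unitary.mem_iff_star_mul_self, RCLike.star_def, RCLike.conj_mul, hz]
  simp

lemma norm_pow_le_of_conj_pow_le {R : Type*} [NormedRing R] (u : Rˣ) {a : R} {C : ℝ}
    (hC : ∀ n : ℕ, ‖((u : R) * a * ↑u⁻¹) ^ n‖ ≤ C) (n : ℕ) :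
    ‖a ^ n‖ ≤ ‖(↑u⁻¹ : R)‖ * C * ‖(u : R)‖ := by
  have ha : a ^ n = ↑u⁻¹ * ((u : R) * a * ↑u⁻¹) ^ n * u := by
    rw [Units.conj_pow, mul_assoc, Units.inv_mul_cancel_right, ← mul_assoc, Units.inv_mul,
      one_mul]
  rw [ha]
  refine (norm_mul_le _ _).trans (mul_le_mul_of_nonneg_right ?_ (norm_nonneg _))
  exact (norm_mul_le _ _).trans (mul_le_mul_of_nonneg_left (hC n) (norm_nonneg _))

lemma norm_le_one_of_mem_spectrum_of_pow_le {A : Type*} [NormedRing A] [NormedAlgebra ℂ A]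
    [CompleteSpace A] [NormOneClass A] {a : A} {C : ℝ} (hC : ∀ n : ℕ, ‖a ^ n‖ ≤ C) {z : ℂ}
    (hz : z ∈ spectrum ℂ a) : ‖z‖ ≤ 1 := by
  by_contra! h
  obtain ⟨n, hn⟩ := pow_unbounded_of_one_lt C h
  have := spectrum.norm_le_norm_of_mem (spectrum.pow_mem_pow a n hz)
  rw [norm_pow] at this
  linarith [hC n]

section CStarAlgebra

variable {A : Type*} [CStarAlgebra A]

lemma IsStarNormal.exists_ne_zero_norm_pow_mul_le {a : A} [IsStarNormal a] {z : ℂ}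
    (hz : z ∈ spectrum ℂ a) {r : ℝ} (hr : ‖z‖ < r) :
    ∃ b ≠ 0, ∀ n : ℕ, ‖a ^ n * b‖ ≤ r ^ n := by
  set δ := r - ‖z‖
  have hδ : 0 < δ := sub_pos.mpr hr
  have hr0 : 0 ≤ r := (norm_nonneg z).trans hr.le
  let f : ℂ → ℂ := fun w => ((max 0 (1 - ‖w - z‖ / δ) : ℝ) : ℂ)
  have hf_le : ∀ w, ‖f w‖ ≤ 1 := fun w => by
    simp only [f, Complex.norm_real, Real.norm_eq_abs]
    rw [abs_of_nonneg (le_max_left _ _)]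
    exact max_le zero_le_one (by linarith [div_nonneg (norm_nonneg (w - z)) hδ.le])
  have hf_zero : ∀ w, δ ≤ ‖w - z‖ → f w = 0 := fun w hw => by
    have : 1 - ‖w - z‖ / δ ≤ 0 := by rw [sub_nonpos, le_div_iff₀ hδ]; linarith
    simp [f, max_eq_left this]
  have hf_cont : Continuous f := by fun_prop
  refine ⟨cfc f a, fun h => ?_, fun n => ?_⟩
  · have := norm_apply_le_norm_cfc f a hz
    norm_num [f, h] at this
  · rw [← cfc_pow_id (R := ℂ) a n, ← cfc_mul (fun w => w ^ n) f a]
    refine norm_cfc_le (by positivity) fun w _ => ?_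
    rcases le_or_gt δ ‖w - z‖ with hw | hw
    · simp [hf_zero w hw]; positivity
    · have hwr : ‖w‖ ≤ r := by
        calc ‖w‖ ≤ ‖z‖ + ‖w - z‖ := by simpa using norm_add_le z (w - z)
          _ ≤ r := by linarith
      rw [norm_mul, norm_pow]
      exact (mul_le_mul (pow_le_pow_left₀ (norm_nonneg w) hwr n) (hf_le w) (norm_nonneg _)
        (pow_nonneg hr0 n)).trans_eq (mul_one _)

lemma IsStarNormal.mem_unitary_of_pow_le {a : A} [IsStarNormal a] {C : ℝ}
    (hC : ∀ n : ℕ, ‖a ^ n‖ ≤ C)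
    (hstable : ∀ b, Tendsto (fun n : ℕ => a ^ n * b) atTop (𝓝 0) → b = 0) :
    a ∈ unitary A := by
  nontriviality A
  refine mem_unitary_of_spectrum_subset_unitary fun z hz => Complex.mem_unitary_of_norm_eq_one ?_
  refine le_antisymm (norm_le_one_of_mem_spectrum_of_pow_le hC hz) (not_lt.1 fun hz1 => ?_)
  obtain ⟨b, hb, hbn⟩ := exists_ne_zero_norm_pow_mul_le hz (r := (‖z‖ + 1) / 2) (by linarith)
  exact hb <| hstable b <| squeeze_zero_norm hbn <|
    tendsto_pow_atTop_nhds_zero_of_lt_one (by positivity) (by linarith)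

end CStarAlgebra

namespace ContinuousLinearMap

variable {𝕜 E : Type*} [NontriviallyNormedField 𝕜] [NormedAddCommGroup E] [NormedSpace 𝕜 E]

lemma eq_zero_of_tendsto_pow_mul {T : E →L[𝕜] E}
    (hT : ∀ x, Tendsto (fun n : ℕ => (T ^ n) x) atTop (𝓝 0) → x = 0) {B : E →L[𝕜] E}
    (hB : Tendsto (fun n : ℕ => T ^ n * B) atTop (𝓝 0)) : B = 0 :=
  ext fun y => hT (B y) <| by
    simpa only [Function.comp_def, apply_apply, mul_apply_eq_comp, zero_apply] using
      ((ContinuousLinearMap.apply 𝕜 E y).continuous.tendsto 0).comp hB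

lemma eq_zero_of_tendsto_conj_pow_apply (u : (E →L[𝕜] E)ˣ) {T : E →L[𝕜] E}
    (hT : ∀ x, Tendsto (fun n : ℕ => (T ^ n) x) atTop (𝓝 0) → x = 0) (x : E)
    (hx : Tendsto (fun n : ℕ => (((u : E →L[𝕜] E) * T * ↑u⁻¹) ^ n) x) atTop (𝓝 0)) : x = 0 := by
  have horbit : ∀ n : ℕ, (T ^ n) ((↑u⁻¹ : E →L[𝕜] E) x) =
      (↑u⁻¹ : E →L[𝕜] E) ((((u : E →L[𝕜] E) * T * ↑u⁻¹) ^ n) x) := fun n => by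
    rw [Units.conj_pow, mul_apply_eq_comp, mul_apply_eq_comp,
      ← mul_apply_eq_comp (↑u⁻¹ : E →L[𝕜] E), Units.inv_mul, one_apply_eq_self]
  have hzero : (↑u⁻¹ : E →L[𝕜] E) x = 0 := hT _ <| by
    simp_rw [horbit]
    simpa only [Function.comp_def, map_zero] using
      ((↑u⁻¹ : E →L[𝕜] E).continuous.tendsto 0).comp hx
  calc x = ((u : E →L[𝕜] E) * ↑u⁻¹) x := by rw [Units.mul_inv, one_apply_eq_self]
    _ = 0 := by rw [mul_apply_eq_comp, hzero, map_zero]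

end ContinuousLinearMap

lemma ContinuousLinearMap.eq_zero_of_tendsto_pow_apply_of_mem_unitary {𝕜 H : Type*} [RCLike 𝕜]
    [NormedAddCommGroup H] [InnerProductSpace 𝕜 H] [CompleteSpace H] {U : H →L[𝕜] H}
    (hU : U ∈ unitary (H →L[𝕜] H)) (x : H)
    (hx : Tendsto (fun n : ℕ => (U ^ n) x) atTop (𝓝 0)) : x = 0 := by
  have hnorm : ∀ n : ℕ, ‖(U ^ n) x‖ = ‖x‖ := fun n => norm_map_of_mem_unitary (pow_mem hU n) x
  rw [tendsto_zero_iff_norm_tendsto_zero] at hx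
  simp only [hnorm] at hx
  exact norm_eq_zero.1 (tendsto_nhds_unique tendsto_const_nhds hx)

lemma lp.eq_zero_of_tendsto_pow_apply {𝕜 I : Type*} [NontriviallyNormedField 𝕜]
    {E : I → Type*} [∀ i, NormedAddCommGroup (E i)] [∀ i, NormedSpace 𝕜 (E i)]
    {p : ENNReal} [Fact (1 ≤ p)] {T : lp E p →L[𝕜] lp E p} {Ti : ∀ i, E i →L[𝕜] E i}
    (hdiag : ∀ (x : lp E p) (i : I), (T x : ∀ j, E j) i = Ti i ((x : ∀ j, E j) i))
    (hTi : ∀ i y, Tendsto (fun n : ℕ => (Ti i ^ n) y) atTop (𝓝 0) → y = 0) (x : lp E p)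
    (hx : Tendsto (fun n : ℕ => (T ^ n) x) atTop (𝓝 0)) : x = 0 := by
  have hpow : ∀ (n : ℕ) (i : I),
      ((T ^ n) x : ∀ j, E j) i = (Ti i ^ n) ((x : ∀ j, E j) i) := fun n i => by
    induction n with
    | zero => simp
    | succ n ih => rw [pow_succ', pow_succ', mul_apply_eq_comp, mul_apply_eq_comp, hdiag, ih]
  have hp : p ≠ 0 := (zero_lt_one.trans_le Fact.out).ne'
  refine lp.ext (funext fun i => hTi i _ ?_)
  simp_rw [← hpow]
  exact squeeze_zero_norm (fun n => lp.norm_apply_le_norm hp _ i)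
    (tendsto_zero_iff_norm_tendsto_zero.1 hx)

theorem stmt19_general {I : Type*} (Hs : I → Type*)
    [∀ i, NormedAddCommGroup (Hs i)] [∀ i, InnerProductSpace ℂ (Hs i)]
    [∀ i, CompleteSpace (Hs i)]
    (Wi : ∀ i, Hs i →L[ℂ] Hs i)
    -- each `W_i` is similar to a unitary operator
    (hWi : ∀ i : I, ∃ X X' U : Hs i →L[ℂ] Hs i, X ∘L X' = 1 ∧ X' ∘L X = 1 ∧
      U ∈ unitary (Hs i →L[ℂ] Hs i) ∧ Wi i = X ∘L U ∘L X')
    -- `W` is the orthogonal sum of the `W_i`, acting on the Hilbert sum `⊕_{i} H_i`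
    (W : lp Hs 2 →L[ℂ] lp Hs 2)
    (hdiag : ∀ (x : lp Hs 2) (i : I), (W x : ∀ j, Hs j) i = Wi i ((x : ∀ j, Hs j) i))
    (hpb : ∃ C : ℝ, ∀ n : ℕ, ‖W ^ n‖ ≤ C)
    -- `W` is similar to a normal operator
    (hnorm : ∃ X X' N : lp Hs 2 →L[ℂ] lp Hs 2, X ∘L X' = 1 ∧ X' ∘L X = 1 ∧
      adjoint N ∘L N = N ∘L adjoint N ∧ W = X ∘L N ∘L X') :
    ∃ X X' U : lp Hs 2 →L[ℂ] lp Hs 2, X ∘L X' = 1 ∧ X' ∘L X = 1 ∧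
      U ∈ unitary (lp Hs 2 →L[ℂ] lp Hs 2) ∧ W = X ∘L U ∘L X' := by
  have hWi_orbit : ∀ i y, Tendsto (fun n : ℕ => (Wi i ^ n) y) atTop (𝓝 0) → y = 0 := by
    intro i
    obtain ⟨X, X', U, hXX', hX'X, hU, hWU⟩ := hWi i
    let ui : (Hs i →L[ℂ] Hs i)ˣ := ⟨X, X', hXX', hX'X⟩
    have hconj : Wi i = ui * U * ↑ui⁻¹ := by rw [hWU, mul_assoc]; rfl
    rw [hconj]
    exact eq_zero_of_tendsto_conj_pow_apply _ (eq_zero_of_tendsto_pow_apply_of_mem_unitary hU)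
  obtain ⟨C, hC⟩ := hpb
  obtain ⟨X, X', N, hXX', hX'X, hN, hW⟩ := hnorm
  set u : (lp Hs 2 →L[ℂ] lp Hs 2)ˣ := ⟨X, X', hXX', hX'X⟩
  have hWN : W = u * N * ↑u⁻¹ := by rw [hW, mul_assoc]; rfl
  have : IsStarNormal N := ⟨by rw [commute_iff_eq, star_eq_adjoint]; exact hN⟩
  have hN_orbit : ∀ x, Tendsto (fun n : ℕ => (N ^ n) x) atTop (𝓝 0) → x = 0 := by
    have hNW : N = ↑u⁻¹ * W * ↑u⁻¹⁻¹ := by simp [hWN, mul_assoc]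
    rw [hNW]
    exact eq_zero_of_tendsto_conj_pow_apply _ (lp.eq_zero_of_tendsto_pow_apply hdiag hWi_orbit)
  refine ⟨X, X', N, hXX', hX'X, ?_, hW⟩
  exact IsStarNormal.mem_unitary_of_pow_le (norm_pow_le_of_conj_pow_le u (hWN ▸ hC))
    fun B => eq_zero_of_tendsto_pow_mul hN_orbit

/-- Let `W = ⊕_{i ∈ I} W_i` be an orthogonal (Hilbert) sum of weighted bilateral shift
operators, with `W` power bounded and each `W_i` similar to a unitary operator.  If `W` is
similar to a normal operator, then `W` is similar to a unitary operator. -/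
theorem stmt19 {I : Type*} (Hs : I → Type*)
    [∀ i, NormedAddCommGroup (Hs i)] [∀ i, InnerProductSpace ℂ (Hs i)]
    [∀ i, CompleteSpace (Hs i)]
    (Wi : ∀ i, Hs i →L[ℂ] Hs i)
    -- each `W_i` is a weighted bilateral shift w.r.t. an orthonormal basis indexed by `ℤ`
    (b : ∀ i, HilbertBasis ℤ ℂ (Hs i)) (w : ∀ i, ℤ → ℂ)
    (hw : ∀ i, ∃ C : ℝ, ∀ k : ℤ, ‖w i k‖ ≤ C)
    (hshift : ∀ (i : I) (k : ℤ), Wi i (b i k) = w i k • b i (k + 1))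
    -- each `W_i` is similar to a unitary operator
    (hWi : ∀ i : I, ∃ X X' U : Hs i →L[ℂ] Hs i, X ∘L X' = 1 ∧ X' ∘L X = 1 ∧
      U ∈ unitary (Hs i →L[ℂ] Hs i) ∧ Wi i = X ∘L U ∘L X')
    -- `W` is the orthogonal sum of the `W_i`, acting on the Hilbert sum `⊕_{i} H_i`
    (W : lp Hs 2 →L[ℂ] lp Hs 2)
    (hdiag : ∀ (x : lp Hs 2) (i : I), (W x : ∀ j, Hs j) i = Wi i ((x : ∀ j, Hs j) i))
    (hpb : ∃ C : ℝ, ∀ n : ℕ, ‖W ^ n‖ ≤ C)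
    -- `W` is similar to a normal operator
    (hnorm : ∃ X X' N : lp Hs 2 →L[ℂ] lp Hs 2, X ∘L X' = 1 ∧ X' ∘L X = 1 ∧
      adjoint N ∘L N = N ∘L adjoint N ∧ W = X ∘L N ∘L X') :
    ∃ X X' U : lp Hs 2 →L[ℂ] lp Hs 2, X ∘L X' = 1 ∧ X' ∘L X = 1 ∧
      U ∈ unitary (lp Hs 2 →L[ℂ] lp Hs 2) ∧ W = X ∘L U ∘L X' :=
  stmt19_general Hs Wi hWi W hdiag hpb hnorm
end
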